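/- arXiv:math/0507166 — 8 statements merged into one kernel-verified Lean document; each statement's English description precedes it below -/
import Mathlib

section
/- For integers m > k ≥ 0 and any two n×n complex matrices A and B, Tr[S_{m,k}(A,B)] = (m/(m-k)) · Tr[A·S_{m-1,k}(A,B)]. -/
/-!
Write `W` for the words of length `m` with exactly `k` letters `B`, so `m - k` letters `A`.
Counting the pairs `(w, i)` with `w ∈ W` and `w i = A` in two ways: each `w` contributes `m - k`
pairs, while for each position `i`, rotating `w` so that it starts at `i` is a bijection onto the
words of `W` that begin with `A`. Since rotating a word does not change the trace of its product,
`(m - k) Tr S_{m,k} = m · Σ_{w ∈ W, w₀ = A} Tr w = m · Tr (A S_{m-1,k})`.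
-/

open Matrix BigOperators

/-- `S A B m k` is the sum of all words of length `m` in the matrices `A` and `B`
in which `B` appears exactly `k` times (the coefficient of `t^k` in `(A+tB)^m`). -/
noncomputable def S {n : ℕ} (A B : Matrix (Fin n) (Fin n) ℂ) (m k : ℕ) :
    Matrix (Fin n) (Fin n) ℂ :=
  ∑ f ∈ Finset.univ.filter
      (fun f : Fin m → Bool => (Finset.univ.filter (fun i => f i = true)).card = k),
    (List.ofFn (fun i : Fin m => if f i then B else A)).prod

/-- The Frobenius (Euclidean) norm of a complex matrix, `‖A‖ = Tr[AA*]^{1/2}`. -/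
noncomputable def frobNorm {n : ℕ} (A : Matrix (Fin n) (Fin n) ℂ) : ℝ :=
  Real.sqrt (Matrix.trace (A * Aᴴ)).re

open Finset

lemma Finset.card_filter_comp_equiv {ι : Type*} [Fintype ι] (p : ι → Prop) [DecidablePred p]
    (e : ι ≃ ι) : #{j | p (e j)} = #{j | p j} :=
  card_nbij' e e.symm (by simp [Set.MapsTo]) (by simp [Set.MapsTo]) (fun _ _ => by simp)
    (fun _ _ => by simp)

lemma List.rotate_ofFn {α : Type*} {m : ℕ} (g : Fin (m + 1) → α) (i : Fin (m + 1)) :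
    (List.ofFn g).rotate i = List.ofFn fun j => g (j + i) := by
  apply List.ext_getElem (by simp)
  intro j _ _
  simp only [List.getElem_rotate, List.length_ofFn, List.getElem_ofFn, Fin.add_def]

lemma Matrix.trace_list_prod_rotate {n R : Type*} [Fintype n] [DecidableEq n] [CommSemiring R]
    (l : List (Matrix n n R)) (i : ℕ) : (l.rotate i).prod.trace = l.prod.trace := by
  rw [List.rotate_eq_drop_append_take_mod, List.prod_append, trace_mul_comm, ← List.prod_append,
    List.take_append_drop]

def wordsWithCount (m k : ℕ) : Finset (Fin m → Bool) := {w | #{i | w i = true} = k}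

def wordProd {α : Type*} [Monoid α] (a b : α) {m : ℕ} (w : Fin m → Bool) : α :=
  (List.ofFn fun i => if w i then b else a).prod

lemma rotate_mem_wordsWithCount {m k : ℕ} {w : Fin (m + 1) → Bool} (i : Fin (m + 1)) :
    (fun j => w (j + i)) ∈ wordsWithCount (m + 1) k ↔ w ∈ wordsWithCount (m + 1) k := by
  simp only [wordsWithCount, mem_filter, mem_univ, true_and]
  rw [← card_filter_comp_equiv (fun j => w j = true) (Equiv.addRight i), Equiv.coe_addRight]

lemma card_filter_false_of_mem_wordsWithCount {m k : ℕ} {w : Fin m → Bool}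
    (hw : w ∈ wordsWithCount m k) : #{i | w i = false} = m - k := by
  simp only [wordsWithCount, mem_filter, mem_univ, true_and] at hw
  have := card_filter_add_card_filter_not (s := univ) (fun i => w i = true)
  simp only [Bool.not_eq_true, card_univ, Fintype.card_fin, hw] at this
  omega

lemma cons_false_mem_wordsWithCount {m k : ℕ} {u : Fin m → Bool} :
    Fin.cons false u ∈ wordsWithCount (m + 1) k ↔ u ∈ wordsWithCount m k := by
  simp only [wordsWithCount, mem_filter, mem_univ, true_and, card_filter, Fin.sum_univ_succ,
    Fin.cons_zero, Fin.cons_succ]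
  simp

lemma wordProd_cons {α : Type*} [Monoid α] (a b : α) {m : ℕ} (x : Bool) (u : Fin m → Bool) :
    wordProd a b (Fin.cons x u) = (if x then b else a) * wordProd a b u := by
  simp [wordProd, List.ofFn_succ]

lemma sum_wordProd_head_false {α : Type*} [Semiring α] (a b : α) (m k : ℕ) :
    ∑ w ∈ wordsWithCount (m + 1) k with w 0 = false, wordProd a b w
      = a * ∑ u ∈ wordsWithCount m k, wordProd a b u := by
  rw [mul_sum]
  refine sum_nbij' Fin.tail (fun u => Fin.cons false u) ?_ ?_ ?_ ?_ ?_
  · intro w hw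
    simp only [mem_filter] at hw
    rw [← cons_false_mem_wordsWithCount, ← hw.2, Fin.cons_self_tail]
    exact hw.1
  · intro u hu
    simp_all [cons_false_mem_wordsWithCount]
  · intro w hw
    simp only [mem_filter] at hw
    rw [← hw.2, Fin.cons_self_tail]
  · intro u _
    exact Fin.tail_cons _ _
  · intro w hw
    simp only [mem_filter] at hw
    rw [← Fin.cons_self_tail w, wordProd_cons, hw.2]
    rfl

lemma sum_filter_apply_false_rotate {M : Type*} [AddCommMonoid M] {m : ℕ} (k : ℕ)
    (g : (Fin (m + 1) → Bool) → M) (i : Fin (m + 1)) :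
    ∑ w ∈ wordsWithCount (m + 1) k with w i = false, g (fun j => w (j + i))
      = ∑ w ∈ wordsWithCount (m + 1) k with w 0 = false, g w := by
  refine sum_equiv ((Equiv.subRight i).arrowCongr (Equiv.refl Bool)) (fun w => ?_)
    (fun w _ => rfl)
  change _ ↔ (fun j => w (j + i)) ∈ _
  simp [rotate_mem_wordsWithCount]

lemma sub_nsmul_sum_wordsWithCount {M : Type*} [AddCommMonoid M] {m : ℕ} (k : ℕ)
    (τ : (Fin (m + 1) → Bool) → M) (hτ : ∀ w i, τ (fun j => w (j + i)) = τ w) :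
    (m + 1 - k) • ∑ w ∈ wordsWithCount (m + 1) k, τ w
      = (m + 1) • ∑ w ∈ wordsWithCount (m + 1) k with w 0 = false, τ w := by
  calc (m + 1 - k) • ∑ w ∈ wordsWithCount (m + 1) k, τ w
      = ∑ w ∈ wordsWithCount (m + 1) k, ∑ i with w i = false, τ (fun j => w (j + i)) := by
        rw [smul_sum]
        refine sum_congr rfl fun w hw => ?_
        simp only [hτ, sum_const, card_filter_false_of_mem_wordsWithCount hw]
    _ = ∑ i, ∑ w ∈ wordsWithCount (m + 1) k with w i = false, τ (fun j => w (j + i)) :=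
        sum_comm' (fun w i => by simp [and_comm])
    _ = (m + 1) • ∑ w ∈ wordsWithCount (m + 1) k with w 0 = false, τ w := by
        simp only [sum_filter_apply_false_rotate, sum_const, card_univ, Fintype.card_fin]

lemma trace_wordProd_rotate {n R : Type*} [Fintype n] [DecidableEq n] [CommSemiring R]
    (A B : Matrix n n R) {m : ℕ} (w : Fin (m + 1) → Bool) (i : Fin (m + 1)) :
    (wordProd A B fun j => w (j + i)).trace = (wordProd A B w).trace := by
  rw [wordProd, wordProd, ← List.rotate_ofFn (fun j => if w j then B else A),
    trace_list_prod_rotate]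

lemma sub_nsmul_trace_sum_wordProd {n R : Type*} [Fintype n] [DecidableEq n] [CommSemiring R]
    (A B : Matrix n n R) (m k : ℕ) :
    (m + 1 - k) • (∑ w ∈ wordsWithCount (m + 1) k, wordProd A B w).trace
      = (m + 1) • (A * ∑ u ∈ wordsWithCount m k, wordProd A B u).trace := by
  rw [← sum_wordProd_head_false, trace_sum, trace_sum,
    sub_nsmul_sum_wordsWithCount k _ (trace_wordProd_rotate A B)]

lemma S_eq_sum_wordProd {n : ℕ} (A B : Matrix (Fin n) (Fin n) ℂ) (m k : ℕ) :
    S A B m k = ∑ w ∈ wordsWithCount m k, wordProd A B w :=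
  rfl

theorem stmt_1 {n : ℕ} (m k : ℕ) (hkm : k < m) (A B : Matrix (Fin n) (Fin n) ℂ) :
    Matrix.trace (S A B m k) =
      ((m : ℂ) / ((m : ℂ) - (k : ℂ))) * Matrix.trace (A * S A B (m - 1) k) := by
  obtain ⟨m, rfl⟩ : ∃ p, m = p + 1 := ⟨m - 1, by omega⟩
  have key := sub_nsmul_trace_sum_wordProd A B m k
  rw [nsmul_eq_mul, nsmul_eq_mul, Nat.cast_sub hkm.le] at key
  have hne : ((m + 1 : ℕ) : ℂ) - k ≠ 0 := sub_ne_zero.2 (by exact_mod_cast hkm.ne')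
  rw [Nat.add_sub_cancel, div_mul_eq_mul_div, eq_div_iff hne, S_eq_sum_wordProd,
    S_eq_sum_wordProd]
  linear_combination key
end

section
/- For integers m ≥ k > 0 and any two n×n complex matrices A and B, Tr[S_{m,k}(A,B)] = (m/k) · Tr[B·S_{m-1,k-1}(A,B)]. -/
open Matrix BigOperators

/-!
Tr S_{m,k}(A,B) is the sum of the traces of the words with k letters B, and the trace of a word
is invariant under cyclic rotation. Count the pairs (word, marked letter B) in two ways: every
word carries k marks, while rotating the marked letter to the front shows that each of the m
positions contributes the sum over words beginning with B, i.e. Tr[B S_{m-1,k-1}(A,B)].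
-/

open Finset

section TrueCount

variable {ι : Type*} [Fintype ι]

def trueCount (f : ι → Bool) : ℕ := #{i | f i = true}

lemma trueCount_eq_sum (f : ι → Bool) : trueCount f = ∑ i, if f i then 1 else 0 := by
  rw [trueCount, card_filter]

lemma trueCount_cons {m : ℕ} (b : Bool) (f : Fin m → Bool) :
    trueCount (Fin.cons b f : Fin (m + 1) → Bool) = b.toNat + trueCount f := by
  simp only [trueCount_eq_sum, Fin.sum_univ_succ, Fin.cons_zero, Fin.cons_succ]
  cases b <;> rfl

variable [AddGroup ι]

lemma trueCount_add_right (f : ι → Bool) (c : ι) :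
    trueCount (fun j => f (j + c)) = trueCount f := by
  simp only [trueCount_eq_sum]
  exact Equiv.sum_comp (Equiv.addRight c) fun i => if f i then 1 else 0

variable [DecidableEq ι] {M : Type*} [AddCommMonoid M]

lemma sum_trueCount_smul (G : (ι → Bool) → M) (hG : ∀ c f, G (fun j => f (j + c)) = G f) :
    ∑ f, trueCount f • G f = Fintype.card ι • ∑ f, if f 0 then G f else 0 := by
  have translate (c : ι) : ∑ f, (if f c then G f else 0) = ∑ f, if f 0 then G f else 0 := by
    let e : (ι → Bool) ≃ (ι → Bool) := (Equiv.subRight c).arrowCongr (Equiv.refl Bool)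
    refine Fintype.sum_equiv e _ _ fun f => ?_
    have hef : e f = fun j => f (j + c) := rfl
    simp only [hef, hG, zero_add]
  calc _ = ∑ f, ∑ c, if f c then G f else 0 := by
        simp only [trueCount_eq_sum, sum_smul, ite_smul, one_smul, zero_smul]
    _ = ∑ c : ι, ∑ f, if f c then G f else 0 := sum_comm
    _ = _ := by
        rw [sum_congr rfl fun c _ => translate c, sum_const, card_univ]

end TrueCount

section Word

variable {R n : Type*} [Fintype n] [DecidableEq n]

lemma trace_prod_ofFn_add_right [CommSemiring R] {m : ℕ} (v : Fin m → Matrix n n R)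
    (c : Fin m) :
    trace (List.ofFn fun j => v (j + c)).prod = trace (List.ofFn v).prod := by
  have rotate : (List.ofFn fun j => v (j + c)) = (List.ofFn v).rotate c := by
    apply List.ext_getElem (by simp)
    intro i _ _
    simp only [List.getElem_ofFn, List.getElem_rotate, List.length_ofFn]
    rfl
  rw [rotate, List.rotate_eq_drop_append_take_mod, List.prod_append, trace_mul_comm,
    ← List.prod_append, List.take_append_drop]

def word [Semiring R] {m : ℕ} (A B : Matrix n n R) (f : Fin m → Bool) : Matrix n n R :=
  (List.ofFn fun i => if f i then B else A).prod

lemma trace_word_add_right [CommSemiring R] {m : ℕ} (A B : Matrix n n R) (f : Fin m → Bool)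
    (c : Fin m) :
    trace (word A B fun j => f (j + c)) = trace (word A B f) :=
  trace_prod_ofFn_add_right (fun i => if f i then B else A) c

lemma word_cons [Semiring R] {m : ℕ} (A B : Matrix n n R) (b : Bool) (f : Fin m → Bool) :
    word A B (Fin.cons b f : Fin (m + 1) → Bool) = (if b then B else A) * word A B f := by
  simp only [word, List.ofFn_succ, Fin.cons_zero, Fin.cons_succ, List.prod_cons]

end Word

section Trace

variable {n : ℕ} (A B : Matrix (Fin n) (Fin n) ℂ)

lemma S_eq_sum (m k : ℕ) :
    S A B m k = ∑ f ∈ {f : Fin m → Bool | trueCount f = k}, word A B f := rfl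

lemma mul_S (m k : ℕ) :
    B * S A B m k =
      ∑ f ∈ {f : Fin (m + 1) → Bool | f 0 = true ∧ trueCount f = k + 1}, word A B f := by
  rw [S_eq_sum, mul_sum, sum_filter, sum_filter, ← Equiv.sum_comp (Fin.consEquiv _),
    Fintype.sum_prod_type, Fintype.sum_bool]
  have consEquiv_eq (p : Bool × (Fin m → Bool)) :
      Fin.consEquiv (fun _ => Bool) p = Fin.cons p.1 p.2 := rfl
  simp [consEquiv_eq, trueCount_cons, word_cons, add_comm 1]

lemma succ_smul_trace_S (m k : ℕ) :
    (k + 1) • trace (S A B (m + 1) (k + 1)) = (m + 1) • trace (B * S A B m k) := by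
  let G (f : Fin (m + 1) → Bool) : ℂ := if trueCount f = k + 1 then trace (word A B f) else 0
  have hG (c : Fin (m + 1)) (f : Fin (m + 1) → Bool) : G (fun j => f (j + c)) = G f := by
    simp only [G, trueCount_add_right, trace_word_add_right]
  have double_count := sum_trueCount_smul G hG
  rw [Fintype.card_fin] at double_count
  convert double_count using 1
  · rw [S_eq_sum, trace_sum, smul_sum, sum_filter]
    refine sum_congr rfl fun f _ => ?_
    split_ifs with h <;> simp [G, h]
  · rw [mul_S, trace_sum, sum_filter]
    simp only [G, ite_and]

end Trace

theorem stmt_2_general {n : ℕ} (m k : ℕ) (hk : 0 < k) (A B : Matrix (Fin n) (Fin n) ℂ) :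
    Matrix.trace (S A B m k) =
      ((m : ℂ) / (k : ℂ)) * Matrix.trace (B * S A B (m - 1) (k - 1)) := by
  obtain ⟨k, rfl⟩ := Nat.exists_eq_add_one.mpr hk
  cases m with
  | zero => simp [S]
  | succ m =>
    have h := succ_smul_trace_S A B m k
    simp only [nsmul_eq_mul, Nat.cast_add, Nat.cast_one] at h
    simp only [Nat.add_sub_cancel, Nat.cast_add, Nat.cast_one]
    field_simp
    linear_combination h

theorem stmt_2 {n : ℕ} (m k : ℕ) (hk : 0 < k) (hkm : k ≤ m) (A B : Matrix (Fin n) (Fin n) ℂ) :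
    Matrix.trace (S A B m k) =
      ((m : ℂ) / (k : ℂ)) * Matrix.trace (B * S A B (m - 1) (k - 1)) :=
  stmt_2_general m k hk A B
end

section
/- Suppose A and B are n×n Hermitian matrices of Frobenius norm 1, and r > 0, s > 1 are integers with ‖A^r B^s‖ = 1 (Frobenius norm). Then A = ±B and A has exactly one nonzero eigenvalue. -/
open Matrix BigOperators ComplexOrder

namespace FrobAux

open Complex

attribute [local instance] Matrix.frobeniusSeminormedAddCommGroup

variable {n : ℕ}

noncomputable def frobSq (X : Matrix (Fin n) (Fin n) ℂ) : ℝ := (Matrix.trace (X * Xᴴ)).re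

lemma trace_mul_conjTranspose (X : Matrix (Fin n) (Fin n) ℂ) :
    Matrix.trace (X * Xᴴ) = ∑ i, ∑ j, (Complex.normSq (X i j) : ℂ) := by
  simp only [Matrix.trace, Matrix.diag, Matrix.mul_apply, conjTranspose_apply,
    Complex.star_def, Complex.mul_conj]

lemma frobSq_eq_sum (X : Matrix (Fin n) (Fin n) ℂ) :
    frobSq X = ∑ i, ∑ j, Complex.normSq (X i j) := by
  have h : (∑ i, ∑ j, (Complex.normSq (X i j) : ℂ))
      = ((∑ i, ∑ j, Complex.normSq (X i j) : ℝ) : ℂ) := by push_cast; rfl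
  rw [frobSq, trace_mul_conjTranspose, h, Complex.ofReal_re]

lemma frobSq_nonneg (X : Matrix (Fin n) (Fin n) ℂ) : 0 ≤ frobSq X := by
  rw [frobSq_eq_sum]
  refine Finset.sum_nonneg fun i _ => Finset.sum_nonneg fun j _ => Complex.normSq_nonneg _

lemma frobNorm_def' (X : Matrix (Fin n) (Fin n) ℂ) : frobNorm X = Real.sqrt (frobSq X) := rfl

lemma frobNorm_eq_one (X : Matrix (Fin n) (Fin n) ℂ) : frobNorm X = 1 ↔ frobSq X = 1 := by
  rw [frobNorm_def']; exact Real.sqrt_eq_one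

lemma frobNorm_eq_norm (X : Matrix (Fin n) (Fin n) ℂ) : frobNorm X = ‖X‖ := by
  rw [Matrix.frobenius_norm_def, frobNorm_def', frobSq_eq_sum, Real.sqrt_eq_rpow]
  congr 1
  refine Finset.sum_congr rfl fun i _ => Finset.sum_congr rfl fun j _ => ?_
  rw [show ((2:ℝ)) = ((2:ℕ):ℝ) by norm_num, Real.rpow_natCast,
    Complex.sq_norm]

lemma frobSq_neg (X : Matrix (Fin n) (Fin n) ℂ) : frobSq (-X) = frobSq X := by
  rw [frobSq_eq_sum, frobSq_eq_sum]; simp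

section conj

variable {U : Matrix (Fin n) (Fin n) ℂ} (h1 : Uᴴ * U = 1) (h2 : U * Uᴴ = 1)

include h1 h2

lemma frobSq_conj (X : Matrix (Fin n) (Fin n) ℂ) : frobSq (U * X * Uᴴ) = frobSq X := by
  have hc : ∀ Y : Matrix (Fin n) (Fin n) ℂ, Uᴴ * (U * Y) = Y := fun Y => by
    rw [← Matrix.mul_assoc, h1, Matrix.one_mul]
  have key : (U * X * Uᴴ) * (U * X * Uᴴ)ᴴ = U * (X * Xᴴ) * Uᴴ := by
    simp only [Matrix.conjTranspose_mul, Matrix.conjTranspose_conjTranspose, Matrix.mul_assoc, hc]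
  rw [frobSq, frobSq, key, Matrix.trace_mul_cycle, ← Matrix.mul_assoc, h1, Matrix.one_mul]

lemma conj_pow (X : Matrix (Fin n) (Fin n) ℂ) (k : ℕ) :
    (U * X * Uᴴ) ^ k = U * X ^ k * Uᴴ := by
  have hc : ∀ Y : Matrix (Fin n) (Fin n) ℂ, Uᴴ * (U * Y) = Y := fun Y => by
    rw [← Matrix.mul_assoc, h1, Matrix.one_mul]
  induction k with
  | zero => simp [pow_zero, h2]
  | succ k ih =>
    rw [pow_succ, pow_succ, ih]
    simp only [Matrix.mul_assoc, hc]

lemma trace_conj_diagonal (c : Fin n → ℂ) :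
    Matrix.trace (U * Matrix.diagonal c * Uᴴ) = ∑ i, c i := by
  rw [Matrix.trace_mul_cycle, h1, Matrix.one_mul, Matrix.trace_diagonal]

end conj

lemma conj_diag_apply (U : Matrix (Fin n) (Fin n) ℂ) (c : Fin n → ℂ) (a b : Fin n) :
    (U * Matrix.diagonal c * Uᴴ) a b = ∑ j, U a j * c j * star (U b j) := by
  rw [Matrix.mul_apply]
  refine Finset.sum_congr rfl fun j _ => ?_
  rw [Matrix.mul_diagonal, conjTranspose_apply]

lemma col_sum (X : Matrix (Fin n) (Fin n) ℂ) (j : Fin n) :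
    (Xᴴ * X) j j = ((∑ i, Complex.normSq (X i j) : ℝ) : ℂ) := by
  rw [Matrix.mul_apply]
  push_cast
  refine Finset.sum_congr rfl fun i _ => ?_
  rw [conjTranspose_apply, Complex.star_def, mul_comm, Complex.mul_conj]

lemma frobSq_mul_diagonal (X : Matrix (Fin n) (Fin n) ℂ) (c : Fin n → ℂ) :
    frobSq (X * Matrix.diagonal c) = ∑ j, Complex.normSq (c j) * ∑ i, Complex.normSq (X i j) := by
  rw [frobSq_eq_sum, Finset.sum_comm]
  refine Finset.sum_congr rfl fun j _ => ?_
  rw [Finset.mul_sum]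
  refine Finset.sum_congr rfl fun i _ => ?_
  rw [Matrix.mul_diagonal, Complex.normSq_mul]
  ring

section herm

variable {M : Matrix (Fin n) (Fin n) ℂ} (hM : M.IsHermitian)

lemma herm_unitary₁ : ((hM.eigenvectorUnitary : Matrix (Fin n) (Fin n) ℂ))ᴴ
    * (hM.eigenvectorUnitary : Matrix (Fin n) (Fin n) ℂ) = 1 := hM.eigenvectorUnitary.2.1

lemma herm_unitary₂ : (hM.eigenvectorUnitary : Matrix (Fin n) (Fin n) ℂ)
    * ((hM.eigenvectorUnitary : Matrix (Fin n) (Fin n) ℂ))ᴴ = 1 := hM.eigenvectorUnitary.2.2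

lemma herm_spectral : M = (hM.eigenvectorUnitary : Matrix (Fin n) (Fin n) ℂ)
    * Matrix.diagonal (fun i => ((hM.eigenvalues i : ℝ) : ℂ))
    * ((hM.eigenvectorUnitary : Matrix (Fin n) (Fin n) ℂ))ᴴ := hM.spectral_theorem

lemma herm_pow_spectral (k : ℕ) : M ^ k = (hM.eigenvectorUnitary : Matrix (Fin n) (Fin n) ℂ)
    * Matrix.diagonal (fun i => ((hM.eigenvalues i ^ k : ℝ) : ℂ))
    * ((hM.eigenvectorUnitary : Matrix (Fin n) (Fin n) ℂ))ᴴ := by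
  conv_lhs => rw [herm_spectral hM]
  rw [conj_pow (herm_unitary₁ hM) (herm_unitary₂ hM), Matrix.diagonal_pow]
  congr 2
  funext i
  push_cast
  rfl

lemma frobSq_pow (k : ℕ) : frobSq (M ^ k) = ∑ i, (hM.eigenvalues i ^ k) ^ 2 := by
  have hh : (M ^ k)ᴴ = M ^ k := hM.pow k
  rw [frobSq, hh, ← pow_add, herm_pow_spectral hM (k + k),
    trace_conj_diagonal (herm_unitary₁ hM) (herm_unitary₂ hM)]
  have : (∑ i, ((hM.eigenvalues i ^ (k+k) : ℝ) : ℂ))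
      = ((∑ i, (hM.eigenvalues i ^ k) ^ 2 : ℝ) : ℂ) := by
    push_cast
    exact Finset.sum_congr rfl fun i _ => by ring
  rw [this, Complex.ofReal_re]

end herm

lemma sum_one_support {b : Fin n → ℝ} (hb : ∀ i, 0 ≤ b i) (hsum : ∑ i, b i = 1)
    {i₀ : Fin n} (hi₀ : b i₀ = 1) : ∀ j, j ≠ i₀ → b j = 0 := by
  intro j hj
  have h := Finset.add_sum_erase Finset.univ b (Finset.mem_univ i₀)
  have h0 : ∑ k ∈ Finset.univ.erase i₀, b k = 0 := by rw [hsum] at h; linarith [hi₀ ▸ h]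
  exact (Finset.sum_eq_zero_iff_of_nonneg (fun k _ => hb k)).mp h0 j (by simp [hj])

lemma exists_unique_ne_zero {a : Fin n → ℝ} (h1 : ∑ i, a i ^ 2 = 1) {k : ℕ} (hk : 2 ≤ k)
    (h2 : ∑ i, (a i ^ k) ^ 2 = 1) :
    ∃ i, a i ^ 2 = 1 ∧ ∀ j, j ≠ i → a j = 0 := by
  set b : Fin n → ℝ := fun i => a i ^ 2 with hbdef
  have hb0 : ∀ i, 0 ≤ b i := fun i => sq_nonneg _
  have hb1 : ∀ i, b i ≤ 1 := by
    intro i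
    calc b i ≤ ∑ j, b j := Finset.single_le_sum (fun j _ => hb0 j) (Finset.mem_univ i)
    _ = 1 := h1
  have hbk : ∑ i, b i ^ k = 1 := by
    rw [← h2]; exact Finset.sum_congr rfl fun i _ => by simp [hbdef]; ring
  have heq : ∀ i ∈ Finset.univ, b i ^ k = b i := by
    rw [← Finset.sum_eq_sum_iff_of_le (fun i _ => by
      calc b i ^ k ≤ b i ^ 1 := pow_le_pow_of_le_one (hb0 i) (hb1 i) (by omega)
      _ = b i := pow_one _)]
    rw [hbk, h1]
  have h01 : ∀ i, b i = 0 ∨ b i = 1 := by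
    intro i
    by_contra hc
    push_neg at hc
    obtain ⟨h0, h1'⟩ := hc
    have hpos : 0 < b i := lt_of_le_of_ne (hb0 i) (Ne.symm h0)
    have hlt : b i < 1 := lt_of_le_of_ne (hb1 i) h1'
    have h2' : b i ^ k ≤ b i ^ 2 := pow_le_pow_of_le_one (hb0 i) (hb1 i) hk
    have := heq i (Finset.mem_univ i)
    nlinarith
  obtain ⟨i, hi⟩ : ∃ i, b i = 1 := by
    by_contra hc
    push_neg at hc
    have : ∀ i, b i = 0 := fun i => (h01 i).resolve_right (hc i)
    rw [Finset.sum_eq_zero (fun i _ => this i)] at h1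
    norm_num at h1
  refine ⟨i, hi, fun j hj => ?_⟩
  have := sum_one_support hb0 h1 hi j hj
  exact pow_eq_zero_iff (by norm_num) |>.mp this


lemma frobNorm_mul_le (X Y : Matrix (Fin n) (Fin n) ℂ) :
    frobNorm (X * Y) ≤ frobNorm X * frobNorm Y := by
  rw [frobNorm_eq_norm, frobNorm_eq_norm, frobNorm_eq_norm]
  exact Matrix.frobenius_norm_mul X Y

lemma frobSq_conj' {U : Matrix (Fin n) (Fin n) ℂ} (h1 : Uᴴ * U = 1) (h2 : U * Uᴴ = 1)
    (X : Matrix (Fin n) (Fin n) ℂ) : frobSq (Uᴴ * X * U) = frobSq X := by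
  have := frobSq_conj (U := Uᴴ)
    (by rw [Matrix.conjTranspose_conjTranspose]; exact h2)
    (by rw [Matrix.conjTranspose_conjTranspose]; exact h1) X
  rwa [Matrix.conjTranspose_conjTranspose] at this

end FrobAux

open FrobAux

theorem stmt_11 {n : ℕ} (A B : Matrix (Fin n) (Fin n) ℂ)
    (hA : A.IsHermitian) (hB : B.IsHermitian)
    (hnA : frobNorm A = 1) (hnB : frobNorm B = 1)
    (r s : ℕ) (hr : 0 < r) (hs : 1 < s)
    (h : frobNorm (A ^ r * B ^ s) = 1) :
    (A = B ∨ A = -B) ∧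
      ∃ i : Fin n, hA.eigenvalues i ≠ 0 ∧ ∀ j : Fin n, j ≠ i → hA.eigenvalues j = 0 := by
  classical
  set a := hA.eigenvalues with hadef
  set μ := hB.eigenvalues with hmudef
  have hfA : frobSq A = 1 := (frobNorm_eq_one A).mp hnA
  have hfB : frobSq B = 1 := (frobNorm_eq_one B).mp hnB
  have hfh : frobSq (A ^ r * B ^ s) = 1 := (frobNorm_eq_one _).mp h
  have hsumA : ∑ i, a i ^ 2 = 1 := by
    have h1 := frobSq_pow hA 1
    rw [pow_one] at h1
    simp only [pow_one] at h1
    rw [← h1]; exact hfA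
  have hsumB : ∑ i, μ i ^ 2 = 1 := by
    have h1 := frobSq_pow hB 1
    rw [pow_one] at h1
    simp only [pow_one] at h1
    rw [← h1]; exact hfB
  have haux : ∀ (c : Fin n → ℝ), (∑ i, c i ^ 2 = 1) → ∀ i, c i ^ 2 ≤ 1 := by
    intro c hc i
    calc c i ^ 2 ≤ ∑ j, c j ^ 2 :=
          Finset.single_le_sum (f := fun j => c j ^ 2) (fun j _ => sq_nonneg _)
            (Finset.mem_univ i)
      _ = 1 := hc
  have hpowle : ∀ (c : Fin n → ℝ), (∑ i, c i ^ 2 = 1) → ∀ k, 1 ≤ k →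
      ∑ i, (c i ^ k) ^ 2 ≤ 1 := by
    intro c hc k hk
    calc ∑ i, (c i ^ k) ^ 2 ≤ ∑ i, c i ^ 2 := by
          refine Finset.sum_le_sum fun i _ => ?_
          have he : (c i ^ k) ^ 2 = (c i ^ 2) ^ k := by ring
          rw [he]
          calc (c i ^ 2) ^ k ≤ (c i ^ 2) ^ 1 :=
                pow_le_pow_of_le_one (sq_nonneg _) (haux c hc i) hk
            _ = c i ^ 2 := pow_one _
      _ = 1 := hc
  have hArle : frobSq (A ^ r) ≤ 1 := by rw [frobSq_pow hA r]; exact hpowle a hsumA r (by omega)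
  have hBsle : frobSq (B ^ s) ≤ 1 := by rw [frobSq_pow hB s]; exact hpowle μ hsumB s (by omega)
  have hnAr : frobNorm (A ^ r) ≤ 1 := by
    rw [frobNorm_def']
    exact (Real.sqrt_le_sqrt hArle).trans_eq Real.sqrt_one
  have hnBs : frobNorm (B ^ s) ≤ 1 := by
    rw [frobNorm_def']
    exact (Real.sqrt_le_sqrt hBsle).trans_eq Real.sqrt_one
  have hprodle : (1 : ℝ) ≤ frobNorm (A ^ r) * frobNorm (B ^ s) := by
    calc (1 : ℝ) = frobNorm (A ^ r * B ^ s) := h.symm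
      _ ≤ frobNorm (A ^ r) * frobNorm (B ^ s) := frobNorm_mul_le _ _
  have hBs1 : frobSq (B ^ s) = 1 := by
    rw [← frobNorm_eq_one]
    have h0A : 0 ≤ frobNorm (A ^ r) := Real.sqrt_nonneg _
    have h0B : 0 ≤ frobNorm (B ^ s) := Real.sqrt_nonneg _
    have hge : 1 ≤ frobNorm (B ^ s) := by nlinarith
    exact le_antisymm hnBs hge
  have hsumBs : ∑ i, (μ i ^ s) ^ 2 = 1 := by rw [← frobSq_pow hB s]; exact hBs1
  obtain ⟨i₀, hμ1, hμ0⟩ := exists_unique_ne_zero hsumB (k := s) (by omega) hsumBs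
  -- set up unitaries
  set U : Matrix (Fin n) (Fin n) ℂ := (hB.eigenvectorUnitary : Matrix (Fin n) (Fin n) ℂ)
    with hUdef
  have hU1 : Uᴴ * U = 1 := herm_unitary₁ hB
  have hU2 : U * Uᴴ = 1 := herm_unitary₂ hB
  set D : Matrix (Fin n) (Fin n) ℂ := Matrix.diagonal (fun i => ((μ i : ℝ) : ℂ)) with hDdef
  have hBspec : B = U * D * Uᴴ := herm_spectral hB
  set M : Matrix (Fin n) (Fin n) ℂ := Uᴴ * A * U with hMdef
  have hM : M.IsHermitian := by
    show Mᴴ = M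
    rw [hMdef]
    simp only [Matrix.conjTranspose_mul, Matrix.conjTranspose_conjTranspose, hA.eq,
      Matrix.mul_assoc]
  have hAU : A = U * M * Uᴴ := by
    rw [hMdef]
    calc A = (U * Uᴴ) * A * (U * Uᴴ) := by rw [hU2, Matrix.one_mul, Matrix.mul_one]
      _ = U * (Uᴴ * A * U) * Uᴴ := by simp only [Matrix.mul_assoc]
  have hfM : frobSq M = 1 := by rw [hMdef, frobSq_conj' hU1 hU2]; exact hfA
  set l := hM.eigenvalues with hldef
  have hsumM : ∑ i, l i ^ 2 = 1 := by
    have h1 := frobSq_pow hM 1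
    rw [pow_one] at h1
    simp only [pow_one] at h1
    rw [hldef, ← h1]; exact hfM
  set V : Matrix (Fin n) (Fin n) ℂ := (hM.eigenvectorUnitary : Matrix (Fin n) (Fin n) ℂ)
    with hVdef
  have hV1 : Vᴴ * V = 1 := herm_unitary₁ hM
  have hV2 : V * Vᴴ = 1 := herm_unitary₂ hM
  have hcancel : ∀ Y : Matrix (Fin n) (Fin n) ℂ, Uᴴ * (U * Y) = Y := fun Y => by
    rw [← Matrix.mul_assoc, hU1, Matrix.one_mul]
  have hprodconj : A ^ r * B ^ s = U * (M ^ r * D ^ s) * Uᴴ := by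
    rw [hAU, hBspec, conj_pow hU1 hU2, conj_pow hU1 hU2]
    simp only [Matrix.mul_assoc, hcancel]
  have hfMD : frobSq (M ^ r * D ^ s) = 1 := by
    rw [← frobSq_conj hU1 hU2 (M ^ r * D ^ s), ← hprodconj]; exact hfh
  have hDs : D ^ s = Matrix.diagonal (fun i => ((μ i ^ s : ℝ) : ℂ)) := by
    rw [hDdef, Matrix.diagonal_pow]
    congr 1
    funext i
    push_cast
    rfl
  have hkey : ∑ j, (μ j ^ s * μ j ^ s) * (∑ i, Complex.normSq ((M ^ r) i j)) = 1 := by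
    have h' := frobSq_mul_diagonal (M ^ r) (fun i => ((μ i ^ s : ℝ) : ℂ))
    rw [← hDs] at h'
    calc ∑ j, (μ j ^ s * μ j ^ s) * (∑ i, Complex.normSq ((M ^ r) i j))
        = ∑ j, Complex.normSq ((μ j ^ s : ℝ) : ℂ) * (∑ i, Complex.normSq ((M ^ r) i j)) :=
          Finset.sum_congr rfl fun j _ => by rw [Complex.normSq_ofReal]
      _ = frobSq (M ^ r * D ^ s) := h'.symm
      _ = 1 := hfMD
  set w : Fin n → ℝ := fun j => ∑ i, Complex.normSq ((M ^ r) i j) with hwdef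
  have hw : w i₀ = 1 := by
    rw [Finset.sum_eq_single i₀ (fun j _ hj => by
      rw [hμ0 j hj, zero_pow (by omega : s ≠ 0), zero_mul, zero_mul]) (by simp)] at hkey
    have hone : μ i₀ ^ s * μ i₀ ^ s = 1 := by
      have he : μ i₀ ^ s * μ i₀ ^ s = (μ i₀ ^ 2) ^ s := by ring
      rw [he, hμ1, one_pow]
    rw [hone, one_mul] at hkey
    exact hkey
  have hMr : (M ^ r)ᴴ = M ^ r := hM.pow r
  have hcol : (M ^ (r + r)) i₀ i₀ = ((w i₀ : ℝ) : ℂ) := by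
    rw [pow_add]
    conv_lhs => rw [show M ^ r * M ^ r = (M ^ r)ᴴ * M ^ r by rw [hMr]]
    exact col_sum (M ^ r) i₀
  have hdiagentry : (M ^ (r + r)) i₀ i₀
      = ∑ j, ((l j ^ (r + r) : ℝ) : ℂ) * ((Complex.normSq (V i₀ j) : ℝ) : ℂ) := by
    rw [herm_pow_spectral hM (r + r), ← hldef, ← hVdef, conj_diag_apply]
    refine Finset.sum_congr rfl fun j _ => ?_
    rw [show V i₀ j * ((l j ^ (r + r) : ℝ) : ℂ) * star (V i₀ j)
        = ((l j ^ (r + r) : ℝ) : ℂ) * (V i₀ j * star (V i₀ j)) by ring,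
      Complex.star_def, Complex.mul_conj]
  have hrealC := hdiagentry.symm.trans hcol
  rw [hw] at hrealC
  have hreal : ∑ j, l j ^ (r + r) * Complex.normSq (V i₀ j) = 1 := by exact_mod_cast hrealC
  have hrow : ∑ j, Complex.normSq (V i₀ j) = 1 := by
    have h1' : (V * Vᴴ) i₀ i₀ = 1 := by rw [hV2]; simp [Matrix.one_apply]
    rw [Matrix.mul_apply] at h1'
    have h2' : (∑ j, (Complex.normSq (V i₀ j) : ℂ)) = 1 := by
      rw [← h1']
      exact Finset.sum_congr rfl fun j _ => by
        rw [conjTranspose_apply, Complex.star_def, Complex.mul_conj]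
    exact_mod_cast h2'
  have hpt : ∀ j ∈ Finset.univ, l j ^ (r + r) * Complex.normSq (V i₀ j)
      = Complex.normSq (V i₀ j) := by
    rw [← Finset.sum_eq_sum_iff_of_le (fun j _ => ?_)]
    · rw [hreal, hrow]
    · have hl2 : l j ^ 2 ≤ 1 := haux l hsumM j
      have hle1 : l j ^ (r + r) ≤ 1 := by
        rw [show l j ^ (r + r) = (l j ^ 2) ^ r by ring]
        exact pow_le_one₀ (sq_nonneg _) hl2
      nlinarith [Complex.normSq_nonneg (V i₀ j)]
  obtain ⟨j₀, hj₀⟩ : ∃ j, Complex.normSq (V i₀ j) ≠ 0 := by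
    by_contra hc
    push_neg at hc
    rw [Finset.sum_eq_zero (fun j _ => hc j)] at hrow
    norm_num at hrow
  have hlj₀ : l j₀ ^ 2 = 1 := by
    have h1' := hpt j₀ (Finset.mem_univ j₀)
    have hpow : l j₀ ^ (r + r) = 1 :=
      mul_right_cancel₀ hj₀ (h1'.trans (one_mul _).symm)
    by_contra hne
    have hlt : l j₀ ^ 2 < 1 := lt_of_le_of_ne (haux l hsumM j₀) hne
    have hlt2 : (l j₀ ^ 2) ^ r < 1 := pow_lt_one₀ (sq_nonneg _) hlt (by omega)
    rw [show (l j₀ ^ 2) ^ r = l j₀ ^ (r + r) by ring, hpow] at hlt2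
    norm_num at hlt2
  have hl0 : ∀ j, j ≠ j₀ → l j = 0 := by
    intro j hj
    have hz := sum_one_support (fun i => sq_nonneg (l i)) hsumM hlj₀ j hj
    exact pow_eq_zero_iff (by norm_num) |>.mp hz
  have hν0 : ∀ j, j ≠ j₀ → Complex.normSq (V i₀ j) = 0 := by
    intro j hj
    have h1' := hpt j (Finset.mem_univ j)
    rw [hl0 j hj, zero_pow (by omega : r + r ≠ 0), zero_mul] at h1'
    exact h1'.symm
  have hνj₀ : Complex.normSq (V i₀ j₀) = 1 := by
    rw [← hrow, Finset.sum_eq_single j₀ (fun j _ hj => hν0 j hj) (by simp)]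
  have hcolV : ∑ i, Complex.normSq (V i j₀) = 1 := by
    have h1' : ((∑ i, Complex.normSq (V i j₀) : ℝ) : ℂ) = 1 := by
      rw [← col_sum V j₀, hV1]
      simp [Matrix.one_apply]
    exact_mod_cast h1'
  have hVcol0 : ∀ i, i ≠ i₀ → V i j₀ = 0 := by
    intro i hi
    have hz := sum_one_support (fun i => Complex.normSq_nonneg (V i j₀)) hcolV hνj₀ i hi
    exact Complex.normSq_eq_zero.mp hz
  have hMspec : M = V * Matrix.diagonal (fun i => ((l i : ℝ) : ℂ)) * Vᴴ := herm_spectral hM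
  have hMent : ∀ p q, M p q = if p = i₀ ∧ q = i₀ then ((l j₀ : ℝ) : ℂ) else 0 := by
    intro p q
    rw [hMspec, conj_diag_apply]
    rw [Finset.sum_eq_single j₀ (fun j _ hj => by rw [hl0 j hj]; simp) (by simp)]
    by_cases hp : p = i₀
    · by_cases hq : q = i₀
      · rw [if_pos ⟨hp, hq⟩, hp, hq]
        calc V i₀ j₀ * ((l j₀ : ℝ) : ℂ) * star (V i₀ j₀)
            = (V i₀ j₀ * star (V i₀ j₀)) * ((l j₀ : ℝ) : ℂ) := by ring
          _ = ((l j₀ : ℝ) : ℂ) := by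
              rw [Complex.star_def, Complex.mul_conj, hνj₀]
              simp
      · rw [if_neg (by tauto), hVcol0 q hq]
        simp
    · rw [if_neg (by tauto), hVcol0 p hp]
      simp
  have hDent : ∀ p q, D p q = if p = i₀ ∧ q = i₀ then ((μ i₀ : ℝ) : ℂ) else 0 := by
    intro p q
    rw [hDdef, Matrix.diagonal_apply]
    by_cases hpq : p = q
    · subst hpq
      by_cases hp : p = i₀
      · subst hp
        simp
      · rw [if_pos rfl, if_neg (by tauto), hμ0 p hp]
        simp
    · rw [if_neg hpq, if_neg (by rintro ⟨h1, h2⟩; exact hpq (h1.trans h2.symm))]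
  have hsign : l j₀ = μ i₀ ∨ l j₀ = -(μ i₀) :=
    sq_eq_sq_iff_eq_or_eq_neg.mp (by rw [hlj₀, hμ1])
  have hABsign : A = B ∨ A = -B := by
    rcases hsign with hcase | hcase
    · left
      have hMD : M = D := by
        ext p q
        rw [hMent, hDent, hcase]
      rw [hAU, hMD, ← hBspec]
    · right
      have hMD : M = -D := by
        ext p q
        rw [hMent, Matrix.neg_apply, hDent]
        by_cases hc : p = i₀ ∧ q = i₀
        · rw [if_pos hc, if_pos hc, hcase]
          push_cast
          ring
        · rw [if_neg hc, if_neg hc, neg_zero]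
      rw [hAU, hMD, Matrix.mul_neg, Matrix.neg_mul, ← hBspec]
  refine ⟨hABsign, ?_⟩
  have hAfin : frobSq (A ^ (r + s)) = 1 := by
    rcases hABsign with hcase | hcase
    · have he : A ^ (r + s) = A ^ r * B ^ s := by rw [hcase, pow_add]
      rw [he]; exact hfh
    · have hBA : B = -A := by rw [hcase, neg_neg]
      rcases Nat.even_or_odd s with hev | hod
      · have he : A ^ r * B ^ s = A ^ (r + s) := by rw [hBA, hev.neg_pow, pow_add]
        rw [← he]; exact hfh
      · have he : A ^ r * B ^ s = -(A ^ (r + s)) := by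
          rw [hBA, hod.neg_pow, Matrix.mul_neg, pow_add]
        rw [← frobSq_neg, ← he]; exact hfh
  have hsumArs : ∑ i, (a i ^ (r + s)) ^ 2 = 1 := by rw [← frobSq_pow hA (r + s)]; exact hAfin
  obtain ⟨i, hi1, hi0⟩ := exists_unique_ne_zero hsumA (k := r + s) (by omega) hsumArs
  exact ⟨i, fun hz => by rw [hz] at hi1; norm_num at hi1, hi0⟩
end

section
/- Let m > k > 0 and let A, B be n×n positive semidefinite Hermitian matrices satisfying the Euler–Lagrange equations A·S_{m-1,k}(A,B) = A²·Tr[A·S_{m-1,k}(A,B)] and B·S_{m-1,k-1}(A,B) = B²·Tr[B·S_{m-1,k-1}(A,B)]. If Tr[S_{m,k}(A,B)] ≤ 0, then S_{m,k}(A,B) is negative semidefinite. -/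
open Matrix BigOperators ComplexOrder

namespace Stmt13Aux

variable {n : ℕ} (A B : Matrix (Fin n) (Fin n) ℂ)

noncomputable def W {m : ℕ} (f : Fin m → Bool) : Matrix (Fin n) (Fin n) ℂ :=
  (List.ofFn (fun i : Fin m => if f i then B else A)).prod

def cnt {m : ℕ} (f : Fin m → Bool) : ℕ :=
  (Finset.univ.filter (fun i => f i = true)).card

lemma S_eq (m k : ℕ) : S A B m k
    = ∑ f ∈ Finset.univ.filter (fun f : Fin m → Bool => cnt f = k), W A B f := rfl

lemma trace_prod_rotate (l : List (Matrix (Fin n) (Fin n) ℂ)) (j : ℕ) :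
    Matrix.trace ((l.rotate j).prod) = Matrix.trace l.prod := by
  rw [← List.rotate_mod]
  rcases Nat.eq_zero_or_pos l.length with h0 | h0
  · rw [List.length_eq_zero_iff.mp h0]; simp
  · have hj : j % l.length ≤ l.length := (Nat.mod_lt _ h0).le
    rw [List.rotate_eq_drop_append_take hj, List.prod_append, Matrix.trace_mul_comm,
      ← List.prod_append, List.take_append_drop]

lemma ofFn_add_rotate {α : Type*} {m : ℕ} (v : Fin m → α) (j : Fin m) :
    List.ofFn (fun i => v (i + j)) = (List.ofFn v).rotate j.val := by
  apply List.ext_get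
  · simp
  · intro i h1 h2
    rw [List.get_ofFn, List.get_rotate]
    rw [List.get_ofFn]
    congr 1
    simp only [List.length_ofFn] at *
    ext
    simp [Fin.add_def]

lemma cnt_comp_equiv {m : ℕ} (f : Fin m → Bool) (e : Fin m ≃ Fin m) :
    cnt (fun i => f (e i)) = cnt f := by
  unfold cnt
  rw [Finset.card_filter, Finset.card_filter]
  exact Equiv.sum_comp e (fun i => if f i = true then 1 else 0)

lemma cnt_cons {m : ℕ} (b : Bool) (g : Fin m → Bool) :
    cnt (Fin.cons b g) = b.toNat + cnt g := by
  unfold cnt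
  rw [Finset.card_filter, Finset.card_filter, Fin.sum_univ_succ]
  simp [Fin.cons_succ]
  cases b <;> simp

lemma W_cons {m : ℕ} (b : Bool) (g : Fin m → Bool) :
    W A B (Fin.cons b g) = (if b then B else A) * W A B g := by
  unfold W
  rw [List.ofFn_succ]
  simp [Fin.cons_succ, List.prod_cons]

lemma sum_head {m : ℕ} (k : ℕ) (b : Bool) :
    ∑ f ∈ Finset.univ.filter
        (fun f : Fin (m+1) → Bool => cnt f = k + b.toNat ∧ f 0 = b), W A B f
      = (if b then B else A) * S A B m k := by
  rw [S_eq, Finset.mul_sum]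
  refine Finset.sum_bij' (fun f _ => Fin.tail f) (fun g _ => Fin.cons b g) ?_ ?_ ?_ ?_ ?_
  · intro f hf
    simp only [Finset.mem_filter, Finset.mem_univ, true_and] at hf ⊢
    have : f = Fin.cons b (Fin.tail f) := by
      rw [← hf.2]; exact (Fin.cons_self_tail f).symm
    have h2 := hf.1
    rw [this, cnt_cons] at h2
    omega
  · intro g hg
    simp only [Finset.mem_filter, Finset.mem_univ, true_and] at hg ⊢
    constructor
    · rw [cnt_cons, hg, Nat.add_comm]
    · simp
  · intro f hf
    simp only [Finset.mem_filter, Finset.mem_univ, true_and] at hf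
    have h : Fin.cons (f 0) (Fin.tail f) = f := Fin.cons_self_tail f
    rw [hf.2] at h
    exact h
  · intro g _
    funext i
    simp [Fin.tail, Fin.cons_succ]
  · intro f hf
    simp only [Finset.mem_filter, Finset.mem_univ, true_and] at hf
    have h : Fin.cons (f 0) (Fin.tail f) = f := Fin.cons_self_tail f
    rw [hf.2] at h
    calc W A B f = W A B (Fin.cons b (Fin.tail f)) := by rw [h]
    _ = (if b then B else A) * W A B (Fin.tail f) := W_cons A B b (Fin.tail f)

lemma S_split {m : ℕ} (k : ℕ) :
    S A B (m+1) k
      = (∑ f ∈ Finset.univ.filter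
          (fun f : Fin (m+1) → Bool => cnt f = k ∧ f 0 = false), W A B f)
      + ∑ f ∈ Finset.univ.filter
          (fun f : Fin (m+1) → Bool => cnt f = k ∧ f 0 = true), W A B f := by
  rw [S_eq]
  rw [← Finset.sum_filter_add_sum_filter_not
    (Finset.univ.filter (fun f : Fin (m+1) → Bool => cnt f = k)) (fun f => f 0 = false)]
  congr 1 <;> rw [Finset.filter_filter] <;> congr 1 <;> ext f <;>
    simp only [Finset.mem_filter, Finset.mem_univ, true_and] <;>
    cases h : f 0 <;> simp_all

lemma S_succ (m k' : ℕ) :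
    S A B (m+1) (k'+1) = A * S A B m (k'+1) + B * S A B m k' := by
  rw [S_split]
  congr 1
  · have := sum_head A B (m := m) (k'+1) false
    simpa using this
  · have := sum_head A B (m := m) k' true
    simpa using this

lemma reverse_ofFn {α : Type*} {m : ℕ} (v : Fin m → α) :
    (List.ofFn v).reverse = List.ofFn (fun i => v i.rev) := by
  apply List.ext_get
  · simp
  · intro i h1 h2
    rw [List.get_ofFn]
    simp only [List.length_reverse, List.length_ofFn] at h1
    rw [List.get_eq_getElem, List.getElem_reverse, List.getElem_ofFn]
    congr 1
    ext
    simp [Fin.rev]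
    omega

lemma W_conjTranspose {m : ℕ} (hA : Aᴴ = A) (hB : Bᴴ = B) (f : Fin m → Bool) :
    (W A B f)ᴴ = W A B (fun i => f i.rev) := by
  unfold W
  rw [Matrix.conjTranspose_list_prod, List.map_ofFn, reverse_ofFn]
  have h : (conjTranspose ∘ fun i : Fin m => if f i = true then B else A)
      = fun i : Fin m => if f i = true then B else A := by
    funext i; cases h : f i <;> simp [h, hA, hB]
  rw [h]

lemma S_isHermitian (hA : Aᴴ = A) (hB : Bᴴ = B) (m k : ℕ) :
    (S A B m k).IsHermitian := by
  unfold Matrix.IsHermitian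
  rw [S_eq, Matrix.conjTranspose_sum]
  refine Finset.sum_bij' (fun f _ => fun i => f (Fin.rev i))
    (fun g _ => fun i => g (Fin.rev i)) ?_ ?_ ?_ ?_ ?_
  · intro f hf
    simp only [Finset.mem_filter, Finset.mem_univ, true_and] at hf ⊢
    rw [← hf]
    exact cnt_comp_equiv f (Fin.revPerm)
  · intro g hg
    simp only [Finset.mem_filter, Finset.mem_univ, true_and] at hg ⊢
    rw [← hg]
    exact cnt_comp_equiv g (Fin.revPerm)
  · intro f _; funext i; simp [Fin.rev_rev]
  · intro g _; funext i; simp [Fin.rev_rev]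
  · intro f _; exact W_conjTranspose A B hA hB f


lemma inner_rot {m : ℕ} (k : ℕ) (b : Bool) (j : Fin (m+1)) :
    ∑ f ∈ Finset.univ.filter (fun f : Fin (m+1) → Bool => cnt f = k ∧ f j = b),
        Matrix.trace (W A B f)
      = ∑ f ∈ Finset.univ.filter (fun f : Fin (m+1) → Bool => cnt f = k ∧ f 0 = b),
        Matrix.trace (W A B f) := by
  refine Finset.sum_bij' (fun f _ => fun i => f (i + j)) (fun g _ => fun i => g (i - j))
    ?_ ?_ ?_ ?_ ?_
  · intro f hf
    simp only [Finset.mem_filter, Finset.mem_univ, true_and] at hf ⊢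
    refine ⟨?_, ?_⟩
    · rw [← hf.1]; exact cnt_comp_equiv f (Equiv.addRight j)
    · rw [zero_add]; exact hf.2
  · intro g hg
    simp only [Finset.mem_filter, Finset.mem_univ, true_and] at hg ⊢
    refine ⟨?_, ?_⟩
    · rw [← hg.1]; exact cnt_comp_equiv g (Equiv.subRight j)
    · rw [sub_self]; exact hg.2
  · intro f _; funext i; show f (i - j + j) = f i; rw [sub_add_cancel]
  · intro g _; funext i; show g (i + j - j) = g i; rw [add_sub_cancel_right]
  · intro f _
    have h := trace_prod_rotate (l := List.ofFn fun i : Fin (m+1) => if f i = true then B else A)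
      (j := j.val)
    rw [← ofFn_add_rotate (fun i : Fin (m+1) => if f i = true then B else A) j] at h
    exact h.symm

lemma count_rot {m : ℕ} (k : ℕ) (b : Bool) :
    ∑ f ∈ Finset.univ.filter (fun f : Fin (m+1) → Bool => cnt f = k),
        ((Finset.univ.filter (fun j => f j = b)).card : ℂ) * Matrix.trace (W A B f)
      = ((m:ℂ)+1) * ∑ f ∈ Finset.univ.filter
          (fun f : Fin (m+1) → Bool => cnt f = k ∧ f 0 = b),
          Matrix.trace (W A B f) := by
  calc ∑ f ∈ Finset.univ.filter (fun f : Fin (m+1) → Bool => cnt f = k),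
        ((Finset.univ.filter (fun j => f j = b)).card : ℂ) * Matrix.trace (W A B f)
      = ∑ f ∈ Finset.univ.filter (fun f : Fin (m+1) → Bool => cnt f = k),
          ∑ j : Fin (m+1), (if f j = b then Matrix.trace (W A B f) else 0) := by
        refine Finset.sum_congr rfl fun f _ => ?_
        rw [← Finset.sum_filter, Finset.sum_const, nsmul_eq_mul]
    _ = ∑ j : Fin (m+1), ∑ f ∈ Finset.univ.filter
          (fun f : Fin (m+1) → Bool => cnt f = k),
          (if f j = b then Matrix.trace (W A B f) else 0) := Finset.sum_comm
    _ = ∑ j : Fin (m+1), ∑ f ∈ Finset.univ.filter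
          (fun f : Fin (m+1) → Bool => cnt f = k ∧ f j = b), Matrix.trace (W A B f) := by
        refine Finset.sum_congr rfl fun j _ => ?_
        rw [← Finset.sum_filter, Finset.filter_filter]
    _ = ∑ _j : Fin (m+1), ∑ f ∈ Finset.univ.filter
          (fun f : Fin (m+1) → Bool => cnt f = k ∧ f 0 = b), Matrix.trace (W A B f) := by
        exact Finset.sum_congr rfl fun j _ => inner_rot A B k b j
    _ = ((m:ℂ)+1) * ∑ f ∈ Finset.univ.filter
          (fun f : Fin (m+1) → Bool => cnt f = k ∧ f 0 = b), Matrix.trace (W A B f) := by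
        rw [Finset.sum_const, Finset.card_univ, Fintype.card_fin, nsmul_eq_mul]
        push_cast
        ring

lemma card_false {m k : ℕ} (f : Fin (m+1) → Bool) (hf : cnt f = k) :
    (Finset.univ.filter (fun j => f j = false)).card = m + 1 - k := by
  have h1 : (Finset.univ.filter (fun j => f j = false))
      = Finset.univ \ (Finset.univ.filter (fun j => f j = true)) := by
    rw [← Finset.filter_not]
    congr 1; funext j; cases h : f j <;> simp [h]
  rw [h1, Finset.card_sdiff_of_subset (Finset.filter_subset _ _), Finset.card_univ, Fintype.card_fin]
  rw [show (Finset.univ.filter (fun j => f j = true)).card = k from hf]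

lemma trace_id_false {m k : ℕ} :
    ((m + 1 - k : ℕ) : ℂ) * Matrix.trace (S A B (m+1) k)
      = ((m:ℂ)+1) * Matrix.trace (A * S A B m k) := by
  have hhead := sum_head A B (m := m) k false
  simp only [Bool.toNat_false, Nat.add_zero, if_neg (Bool.false_ne_true)] at hhead
  rw [S_eq, Matrix.trace_sum, Finset.mul_sum, ← hhead, Matrix.trace_sum, ← count_rot]
  refine Finset.sum_congr rfl fun f hf => ?_
  simp only [Finset.mem_filter, Finset.mem_univ, true_and] at hf
  rw [card_false f hf]

lemma trace_id_true {m k : ℕ} (hk : 0 < k) :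
    ((k : ℕ) : ℂ) * Matrix.trace (S A B (m+1) k)
      = ((m:ℂ)+1) * Matrix.trace (B * S A B m (k-1)) := by
  have hk1 : k - 1 + 1 = k := Nat.succ_pred_eq_of_pos hk
  have hhead : ∑ f ∈ Finset.univ.filter
      (fun f : Fin (m+1) → Bool => cnt f = k ∧ f 0 = true), W A B f
      = B * S A B m (k-1) := by
    have h := sum_head A B (m := m) (k-1) true
    simpa [hk1] using h
  rw [S_eq, Matrix.trace_sum, Finset.mul_sum, ← hhead, Matrix.trace_sum, ← count_rot]
  refine Finset.sum_congr rfl fun f hf => ?_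
  simp only [Finset.mem_filter, Finset.mem_univ, true_and] at hf
  rw [show (Finset.univ.filter (fun j => f j = true)).card = k from hf]

lemma smul_psd {M : Matrix (Fin n) (Fin n) ℂ} (hM : M.PosSemidef) (c : ℝ) (hc : 0 ≤ c) :
    ((c : ℂ) • M).PosSemidef := by
  constructor
  · show ((c:ℂ) • M)ᴴ = (c:ℂ) • M
    rw [Matrix.conjTranspose_smul, hM.1.eq]
    congr 1
    simp [Complex.star_def, Complex.conj_ofReal]
  · intro x
    exact (hM.smul (a := (c:ℂ)) (Complex.zero_le_real.mpr hc)).2 x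

end Stmt13Aux

open Stmt13Aux

theorem stmt_13 {n : ℕ} (m k : ℕ) (hk : 0 < k) (hkm : k < m)
    (A B : Matrix (Fin n) (Fin n) ℂ) (hA : A.PosSemidef) (hB : B.PosSemidef)
    (hEL1 : A * S A B (m - 1) k = Matrix.trace (A * S A B (m - 1) k) • (A ^ 2))
    (hEL2 : B * S A B (m - 1) (k - 1) =
      Matrix.trace (B * S A B (m - 1) (k - 1)) • (B ^ 2))
    (htr : (Matrix.trace (S A B m k)).re ≤ 0) :
    (-(S A B m k)).PosSemidef := by
  obtain ⟨p, rfl⟩ : ∃ p, m = p + 1 := ⟨m - 1, by omega⟩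
  have hp1 : p + 1 - 1 = p := rfl
  rw [hp1] at hEL1 hEL2
  set c1 := Matrix.trace (A * S A B p k) with hc1def
  set c2 := Matrix.trace (B * S A B p (k-1)) with hc2def
  set t := Matrix.trace (S A B (p+1) k) with htdef
  -- the split
  have hk1 : k - 1 + 1 = k := Nat.succ_pred_eq_of_pos hk
  have hsplit : S A B (p+1) k = c1 • A ^ 2 + c2 • B ^ 2 := by
    have h := S_succ A B p (k - 1)
    rw [hk1] at h
    rw [h, hEL1, hEL2]
  -- t is real
  have hherm : (S A B (p+1) k).IsHermitian :=
    S_isHermitian A B hA.1.eq hB.1.eq (p+1) k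
  have htre : t = ((t.re : ℝ) : ℂ) := by
    have hstar : (starRingEnd ℂ) t = t := by
      have := Matrix.trace_conjTranspose (S A B (p+1) k)
      rw [hherm.eq] at this
      exact this.symm
    exact ((Complex.conj_eq_iff_re).mp hstar).symm
  -- trace identities
  have hd : ((p : ℂ) + 1) ≠ 0 := by
    have : ((p+1 : ℕ) : ℂ) ≠ 0 := Nat.cast_ne_zero.mpr (by omega)
    push_cast at this
    exact this
  have hid1 : c1 = (((p + 1 - k : ℕ) : ℂ) * t) / ((p:ℂ)+1) := by
    have := trace_id_false A B (m := p) (k := k)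
    rw [← htdef, ← hc1def] at this
    field_simp
    rw [this]
    ring
  have hid2 : c2 = (((k : ℕ) : ℂ) * t) / ((p:ℂ)+1) := by
    have := trace_id_true A B (m := p) hk
    rw [← htdef, ← hc2def] at this
    field_simp
    rw [this]
    ring
  -- write c1, c2 as nonpositive reals
  set u1 : ℝ := ((p + 1 - k : ℕ) : ℝ) * (-t.re) / ((p:ℝ)+1) with hu1def
  set u2 : ℝ := ((k : ℕ) : ℝ) * (-t.re) / ((p:ℝ)+1) with hu2def
  have hu1 : 0 ≤ u1 := by
    apply div_nonneg
    · exact mul_nonneg (Nat.cast_nonneg _) (by linarith)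
    · positivity
  have hu2 : 0 ≤ u2 := by
    apply div_nonneg
    · exact mul_nonneg (Nat.cast_nonneg _) (by linarith)
    · positivity
  have hc1 : c1 = -((u1 : ℝ) : ℂ) := by
    rw [hid1, hu1def, htre]
    push_cast
    field_simp
    rw [Complex.ofReal_re]
  have hc2 : c2 = -((u2 : ℝ) : ℂ) := by
    rw [hid2, hu2def, htre]
    push_cast
    field_simp
    rw [Complex.ofReal_re]
  have hfin : -(S A B (p+1) k) = ((u1:ℝ):ℂ) • A ^ 2 + ((u2:ℝ):ℂ) • B ^ 2 := by
    rw [hsplit, hc1, hc2, neg_add, neg_smul, neg_smul, neg_neg, neg_neg]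
  rw [hfin]
  exact (smul_psd (hA.pow 2) u1 hu1).add (smul_psd (hB.pow 2) u2 hu2)
end

section
/- Let m > k > 0 and let A, B be nonzero n×n positive semidefinite Hermitian matrices satisfying A·S_{m-1,k}(A,B) = A²·Tr[A·S_{m-1,k}(A,B)] and B·S_{m-1,k-1}(A,B) = B²·Tr[B·S_{m-1,k-1}(A,B)]. If Tr[S_{m,k}(A,B)] = 0, then S_{m,k}(A,B) = 0. -/
open Matrix BigOperators ComplexOrder

namespace stmt14aux

variable {n : ℕ} (A B : Matrix (Fin n) (Fin n) ℂ)

noncomputable def word {m : ℕ} (f : Fin m → Bool) : Matrix (Fin n) (Fin n) ℂ :=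
  (List.ofFn (fun i : Fin m => if f i then B else A)).prod

def W (m k : ℕ) : Finset (Fin m → Bool) :=
  Finset.univ.filter (fun f => (Finset.univ.filter (fun i => f i = true)).card = k)

lemma S_eq (m k : ℕ) : S A B m k = ∑ f ∈ W m k, word A B f := rfl

lemma card_cons {M : ℕ} (b : Bool) (g : Fin M → Bool) :
    (Finset.univ.filter (fun i => (Fin.cons b g : Fin (M+1) → Bool) i = true)).card
      = (if b then 1 else 0) + (Finset.univ.filter (fun i => g i = true)).card := by
  rw [Finset.card_filter, Finset.card_filter, Fin.sum_univ_succ]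
  simp [Fin.cons_zero, Fin.cons_succ]

lemma word_cons {M : ℕ} (b : Bool) (g : Fin M → Bool) :
    word A B (Fin.cons b g) = (if b then B else A) * word A B g := by
  unfold word
  rw [List.ofFn_succ]
  simp [Fin.cons_zero, Fin.cons_succ]

lemma sum_W_succ {β : Type*} [AddCommMonoid β] (M k : ℕ) (φ : (Fin (M+1) → Bool) → β) :
    ∑ f ∈ W (M+1) (k+1), φ f
      = (∑ g ∈ W M (k+1), φ (Fin.cons false g)) + ∑ g ∈ W M k, φ (Fin.cons true g) := by
  rw [W, Finset.sum_filter]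
  rw [← Equiv.sum_comp (Fin.consEquiv (fun _ => Bool))]
  rw [Fintype.sum_prod_type, Fintype.sum_bool]
  have hsymm : ∀ p : Bool × (Fin M → Bool),
      ((Fin.consEquiv (fun _ => Bool)) p : Fin (M+1) → Bool) = Fin.cons p.1 p.2 := fun p => rfl
  simp only [hsymm, card_cons]
  rw [W, W, Finset.sum_filter, Finset.sum_filter]
  rw [add_comm]
  congr 1
  · apply Finset.sum_congr rfl; intro g _
    simp
  · apply Finset.sum_congr rfl; intro g _
    have : 1 + (Finset.filter (fun i => g i = true) Finset.univ).card = k + 1 ↔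
        (Finset.filter (fun i => g i = true) Finset.univ).card = k := by omega
    simp [this]

/-- recurrence -/
lemma S_rec (M k : ℕ) :
    S A B (M+1) (k+1) = A * S A B M (k+1) + B * S A B M k := by
  rw [S_eq, S_eq, S_eq, sum_W_succ, Finset.mul_sum, Finset.mul_sum]
  congr 1 <;> (apply Finset.sum_congr rfl; intro g _; rw [word_cons]; simp)

lemma trace_rot1 {M : ℕ} (g : Fin (M+1) → Matrix (Fin n) (Fin n) ℂ) :
    trace (List.ofFn (fun i => g (i + 1))).prod = trace (List.ofFn g).prod := by
  have h1 : ∀ i : Fin M, (i.castSucc + 1 : Fin (M+1)) = i.succ := by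
    intro i; ext; simp [Fin.val_add_one]
  rw [List.ofFn_succ' (fun i : Fin (M+1) => g (i+1)), List.ofFn_succ (f := g)]
  simp only [h1, Fin.last_add_one, List.concat_eq_append, List.prod_append,
    List.prod_cons, List.prod_nil, mul_one]
  rw [trace_mul_comm]

open Fin.NatCast Fin.CommRing in
lemma trace_rot {M : ℕ} (g : Fin (M+1) → Matrix (Fin n) (Fin n) ℂ) (t : ℕ) :
    trace (List.ofFn (fun i => g (i + (t : Fin (M+1))))).prod = trace (List.ofFn g).prod := by
  induction t with
  | zero => simp
  | succ t ih =>
    have h : ∀ i : Fin (M+1), i + ((t+1 : ℕ) : Fin (M+1)) = (i + 1) + (t : Fin (M+1)) := by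
      intro i; push_cast; ring
    simp only [h]
    exact (trace_rot1 (fun j => g (j + (t : Fin (M+1))))).trans ih

open Fin.NatCast in
lemma trace_word_rot {M : ℕ} (f : Fin (M+1) → Bool) (c : Fin (M+1)) :
    trace (word A B (fun i => f (i + c))) = trace (word A B f) := by
  have := trace_rot (n := n) (fun i => if f i then B else A) c.val
  simpa [word, Fin.cast_val_eq_self] using this

lemma card_shift {M : ℕ} (f : Fin (M+1) → Bool) (c : Fin (M+1)) :
    (Finset.univ.filter (fun i => f (i + c) = true)).card
      = (Finset.univ.filter (fun i => f i = true)).card := by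
  apply Finset.card_bij' (fun i _ => i + c) (fun i _ => i - c)
  · intro a ha; simpa using Finset.mem_filter.mp ha |>.2
  · intro a ha; simpa [sub_add_cancel] using Finset.mem_filter.mp ha |>.2
  · intro a _; simp [add_sub_cancel_right]
  · intro a _; simp [sub_add_cancel]

lemma mem_W_shift {M k : ℕ} (f : Fin (M+1) → Bool) (c : Fin (M+1)) (hf : f ∈ W (M+1) k) :
    (fun i => f (i + c)) ∈ W (M+1) k := by
  simp only [W, Finset.mem_filter, Finset.mem_univ, true_and] at hf ⊢
  rw [card_shift]; exact hf

/-- for any j, conditioning on position j gives the same sum as conditioning on 0 -/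
lemma sum_cond_shift {M k : ℕ} (b : Bool) (j : Fin (M+1)) :
    ∑ f ∈ W (M+1) k, (if f j = b then trace (word A B f) else 0)
      = ∑ f ∈ W (M+1) k, (if f 0 = b then trace (word A B f) else 0) := by
  apply Finset.sum_bij' (fun f _ => fun i => f (i + j)) (fun f _ => fun i => f (i - j))
  · intro f hf; exact mem_W_shift f j hf
  · intro f hf
    have := mem_W_shift (M := M) (k := k) f (-j) hf
    simpa [sub_eq_add_neg] using this
  · intro f _; funext i; simp
  · intro f _; funext i; simp
  · intro f _
    have h0 : (fun i => f (i + j)) 0 = f j := by simp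
    rw [h0, trace_word_rot]

end stmt14aux

namespace stmt14aux
variable {n : ℕ} (A B : Matrix (Fin n) (Fin n) ℂ)

lemma split0_false (M k' : ℕ) :
    ∑ f ∈ W (M+1) (k'+1), (if f 0 = false then trace (word A B f) else 0)
      = trace (A * S A B M (k'+1)) := by
  rw [sum_W_succ M k' (fun f => if f 0 = false then trace (word A B f) else 0)]
  simp only [Fin.cons_zero, if_pos rfl, word_cons]
  simp only [if_neg (by simp : ¬ (true = false)), Finset.sum_const_zero, add_zero]
  rw [S_eq, Finset.mul_sum, trace_sum]
  simp

lemma split0_true (M k' : ℕ) :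
    ∑ f ∈ W (M+1) (k'+1), (if f 0 = true then trace (word A B f) else 0)
      = trace (B * S A B M k') := by
  rw [sum_W_succ M k' (fun f => if f 0 = true then trace (word A B f) else 0)]
  simp only [Fin.cons_zero, word_cons]
  simp only [if_neg (by simp : ¬ (false = true)), if_pos rfl, Finset.sum_const_zero, zero_add]
  rw [S_eq, Finset.mul_sum, trace_sum]
  simp

lemma count_false {M k : ℕ} (f : Fin (M+1) → Bool) (hf : f ∈ W (M+1) k) :
    (Finset.univ.filter (fun j => f j = false)).card = (M+1) - k := by
  simp only [W, Finset.mem_filter, Finset.mem_univ, true_and] at hf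
  have h := Finset.card_filter_add_card_filter_not
    (s := (Finset.univ : Finset (Fin (M+1)))) (p := fun j => f j = true)
  have he : (Finset.univ.filter (fun j => ¬ f j = true)) =
      (Finset.univ.filter (fun j => f j = false)) := by
    apply Finset.filter_congr; intro j _; simp
  rw [hf, he] at h
  simp at h
  omega

theorem double_count (M k' : ℕ) (b : Bool) :
    ∑ f ∈ W (M+1) (k'+1), ((Finset.univ.filter (fun j => f j = b)).card : ℂ) * trace (word A B f)
      = ((M+1 : ℕ) : ℂ) * ∑ f ∈ W (M+1) (k'+1), (if f 0 = b then trace (word A B f) else 0) := by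
  have lhs_eq : ∀ f ∈ W (M+1) (k'+1),
      ((Finset.univ.filter (fun j => f j = b)).card : ℂ) * trace (word A B f)
        = ∑ j : Fin (M+1), (if f j = b then trace (word A B f) else 0) := by
    intro f _
    rw [Finset.sum_ite, Finset.sum_const_zero, add_zero, Finset.sum_const, nsmul_eq_mul]
  rw [Finset.sum_congr rfl lhs_eq, Finset.sum_comm]
  rw [Finset.sum_congr rfl (fun j _ => sum_cond_shift A B b j)]
  rw [Finset.sum_const, nsmul_eq_mul]
  simp

lemma traceA_eq (M k' : ℕ) :
    ((M+1 : ℕ) : ℂ) * trace (A * S A B M (k'+1))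
      = ((M - k' : ℕ) : ℂ) * trace (S A B (M+1) (k'+1)) := by
  have h := double_count A B M k' false
  rw [split0_false] at h
  rw [← h, S_eq, trace_sum, Finset.mul_sum]
  apply Finset.sum_congr rfl
  intro f hf
  rw [count_false f hf]
  congr 2
  omega

lemma traceB_eq (M k' : ℕ) :
    ((M+1 : ℕ) : ℂ) * trace (B * S A B M k')
      = ((k'+1 : ℕ) : ℂ) * trace (S A B (M+1) (k'+1)) := by
  have h := double_count A B M k' true
  rw [split0_true] at h
  rw [← h, S_eq, trace_sum, Finset.mul_sum]
  apply Finset.sum_congr rfl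
  intro f hf
  have : (Finset.univ.filter (fun j => f j = true)).card = k'+1 := by
    simpa [W] using hf
  rw [this]

end stmt14aux

theorem stmt_14 {n : ℕ} (m k : ℕ) (hk : 0 < k) (hkm : k < m)
    (A B : Matrix (Fin n) (Fin n) ℂ) (hA : A.PosSemidef) (hB : B.PosSemidef)
    (hA0 : A ≠ 0) (hB0 : B ≠ 0)
    (hEL1 : A * S A B (m - 1) k = Matrix.trace (A * S A B (m - 1) k) • (A ^ 2))
    (hEL2 : B * S A B (m - 1) (k - 1) =
      Matrix.trace (B * S A B (m - 1) (k - 1)) • (B ^ 2))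
    (htr : Matrix.trace (S A B m k) = 0) :
    S A B m k = 0 := by
  obtain ⟨k', rfl⟩ : ∃ k', k = k'+1 := ⟨k-1, (Nat.succ_pred_eq_of_pos hk).symm⟩
  obtain ⟨M, rfl⟩ : ∃ M, m = M+1 := ⟨m-1, (Nat.succ_pred_eq_of_pos (by omega)).symm⟩
  simp only [Nat.add_sub_cancel] at hEL1 hEL2
  have hM1 : ((M+1 : ℕ) : ℂ) ≠ 0 := by exact_mod_cast Nat.succ_ne_zero M
  have hta : Matrix.trace (A * S A B M (k'+1)) = 0 := by
    have := stmt14aux.traceA_eq A B M k'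
    rw [htr, mul_zero] at this
    exact (mul_eq_zero.mp this).resolve_left hM1
  have htb : Matrix.trace (B * S A B M k') = 0 := by
    have := stmt14aux.traceB_eq A B M k'
    rw [htr, mul_zero] at this
    exact (mul_eq_zero.mp this).resolve_left hM1
  rw [stmt14aux.S_rec, hEL1, hEL2, hta, htb, zero_smul, zero_smul, add_zero]
end

section
/- Let m > k > 0 and let A, B be n×n positive semidefinite Hermitian matrices satisfying the two Euler–Lagrange equations A·S_{m-1,k}(A,B) = A²·Tr[A·S_{m-1,k}(A,B)] and B·S_{m-1,k-1}(A,B) = B²·Tr[B·S_{m-1,k-1}(A,B)], with A ≠ 0, and suppose Tr[S_{m,k}(A,B)] < 0. Then Tr[S_{m+1,k}(A,B)] < 0. -/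
open Matrix BigOperators ComplexOrder

namespace St15

/-! ### Counting helpers -/

def cnt {m : ℕ} (f : Fin m → Bool) : ℕ :=
  (Finset.univ.filter (fun i => f i = true)).card

lemma cnt_le {m : ℕ} (f : Fin m → Bool) : cnt f ≤ m := by
  classical
  calc cnt f ≤ Finset.univ.card := Finset.card_filter_le _ _
  _ = m := by simp

lemma cnt_succ {m : ℕ} (f : Fin (m + 1) → Bool) :
    cnt f = (if f 0 then 1 else 0) + cnt (fun i => f i.succ) := by
  classical
  unfold cnt
  rw [Finset.card_filter, Finset.card_filter, Fin.sum_univ_succ]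

lemma cnt_rotate {m : ℕ} (f : Fin (m + 1) → Bool) (j : Fin (m + 1)) :
    cnt (fun i => f (i + j)) = cnt f := by
  classical
  unfold cnt
  apply Finset.card_bij (fun i _ => i + j)
  · intro a ha
    simpa using Finset.mem_filter.mp ha |>.2
  · intro a _ b _ h
    exact add_right_cancel h
  · intro b hb
    refine ⟨b - j, ?_, by simp⟩
    simp only [Finset.mem_filter, Finset.mem_univ, true_and, sub_add_cancel]
    simpa using Finset.mem_filter.mp hb |>.2

lemma cnt_add_cnt_not {m : ℕ} (f : Fin m → Bool) : cnt f + cnt (fun i => ! f i) = m := by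
  classical
  unfold cnt
  have h : (Finset.univ.filter (fun i => (! f i) = true))
      = Finset.univ.filter (fun i : Fin m => ¬ (f i = true)) := by
    apply Finset.filter_congr
    intro i _
    simp
  rw [h, Finset.card_filter_add_card_filter_not, Finset.card_univ, Fintype.card_fin]

/-! ### Words -/

variable {n : ℕ} (A B : Matrix (Fin n) (Fin n) ℂ)

noncomputable def word {m : ℕ} (f : Fin m → Bool) : Matrix (Fin n) (Fin n) ℂ :=
  (List.ofFn (fun i : Fin m => if f i then B else A)).prod

lemma S_eq (m k : ℕ) :
    S A B m k = ∑ f ∈ Finset.univ.filter (fun f : Fin m → Bool => cnt f = k),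
      word A B f := rfl

lemma word_succ {m : ℕ} (f : Fin (m + 1) → Bool) :
    word A B f = (if f 0 then B else A) * word A B (fun i => f i.succ) := by
  unfold word
  rw [List.ofFn_succ, List.prod_cons]

lemma trace_word_rotate_one {m : ℕ} (f : Fin (m + 1) → Bool) :
    Matrix.trace (word A B (fun i => f (i + 1))) = Matrix.trace (word A B f) := by
  unfold word
  rw [List.ofFn_succ' (fun i : Fin (m+1) => if f (i + 1) then B else A), List.prod_concat]
  rw [List.ofFn_succ (f := fun i : Fin (m+1) => if f i then B else A), List.prod_cons]
  rw [trace_mul_comm]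
  simp only [Fin.last_add_one, Fin.coeSucc_eq_succ]

open Fin.NatCast Fin.CommRing in
lemma trace_word_rotate {m : ℕ} (f : Fin (m + 1) → Bool) (j : ℕ) :
    Matrix.trace (word A B (fun i => f (i + (j : Fin (m+1)))))
      = Matrix.trace (word A B f) := by
  induction j with
  | zero => simp
  | succ j ih =>
    have h : (fun i : Fin (m+1) => f (i + ((j+1 : ℕ) : Fin (m+1))))
        = (fun i : Fin (m+1) => (fun i' : Fin (m+1) => f (i' + (j : Fin (m+1)))) (i + 1)) := by
      funext i
      congr 1
      push_cast
      ring
    rw [h, trace_word_rotate_one A B (fun i' => f (i' + (j : Fin (m+1)))), ih]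

open Fin.NatCast in
lemma trace_word_rotate' {m : ℕ} (f : Fin (m + 1) → Bool) (j : Fin (m + 1)) :
    Matrix.trace (word A B (fun i => f (i + j))) = Matrix.trace (word A B f) := by
  have := trace_word_rotate A B f (j : ℕ)
  rwa [Fin.cast_val_eq_self] at this

/-! ### Splitting off the first letter -/

lemma sum_split_false (m k : ℕ) :
    ∑ g ∈ Finset.univ.filter (fun g : Fin (m+1) → Bool => cnt g = k ∧ g 0 = false),
      word A B g = A * S A B m k := by
  classical
  rw [S_eq, Finset.mul_sum]
  apply Finset.sum_nbij' (i := fun g : Fin (m+1) → Bool => fun i => g i.succ)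
    (j := fun f : Fin m → Bool => Fin.cons false f)
  · intro g hg
    obtain ⟨hg1, hg2⟩ := (Finset.mem_filter.mp hg).2
    simp only [Finset.mem_filter, Finset.mem_univ, true_and]
    rw [cnt_succ, hg2] at hg1
    simpa using hg1
  · intro f hf
    have hf1 := (Finset.mem_filter.mp hf).2
    simp only [Finset.mem_filter, Finset.mem_univ, true_and]
    constructor
    · rw [cnt_succ]
      simp only [Fin.cons_zero, Fin.cons_succ, if_false]
      simpa using hf1
    · simp
  · intro g hg
    obtain ⟨hg1, hg2⟩ := (Finset.mem_filter.mp hg).2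
    have : Fin.cons (g 0) (Fin.tail g) = g := Fin.cons_self_tail g
    rw [← hg2]
    exact this
  · intro f _
    funext i
    simp [Fin.cons_succ]
  · intro g hg
    obtain ⟨hg1, hg2⟩ := (Finset.mem_filter.mp hg).2
    rw [word_succ, hg2]
    simp

lemma sum_split_true (m k : ℕ) :
    ∑ g ∈ Finset.univ.filter (fun g : Fin (m+1) → Bool => cnt g = k + 1 ∧ g 0 = true),
      word A B g = B * S A B m k := by
  classical
  rw [S_eq, Finset.mul_sum]
  apply Finset.sum_nbij' (i := fun g : Fin (m+1) → Bool => fun i => g i.succ)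
    (j := fun f : Fin m → Bool => Fin.cons true f)
  · intro g hg
    obtain ⟨hg1, hg2⟩ := (Finset.mem_filter.mp hg).2
    simp only [Finset.mem_filter, Finset.mem_univ, true_and]
    rw [cnt_succ, hg2] at hg1
    simp only [if_true] at hg1
    omega
  · intro f hf
    have hf1 := (Finset.mem_filter.mp hf).2
    simp only [Finset.mem_filter, Finset.mem_univ, true_and]
    constructor
    · rw [cnt_succ]
      simp only [Fin.cons_zero, Fin.cons_succ, if_true]
      have : (cnt fun i => f i) = k := hf1
      omega
    · simp
  · intro g hg
    obtain ⟨hg1, hg2⟩ := (Finset.mem_filter.mp hg).2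
    rw [← hg2]
    exact Fin.cons_self_tail g
  · intro f _
    funext i
    simp [Fin.cons_succ]
  · intro g hg
    obtain ⟨hg1, hg2⟩ := (Finset.mem_filter.mp hg).2
    rw [word_succ, hg2]
    simp

lemma S_succ (m k : ℕ) :
    S A B (m + 1) (k + 1) = A * S A B m (k + 1) + B * S A B m k := by
  classical
  rw [S_eq]
  rw [← Finset.sum_filter_add_sum_filter_not
    (Finset.univ.filter (fun g : Fin (m+1) → Bool => cnt g = k + 1)) (fun g => g 0 = true)]
  rw [Finset.filter_filter, Finset.filter_filter]
  have h1 : (Finset.univ.filter (fun g : Fin (m+1) → Bool => cnt g = k + 1 ∧ ¬ g 0 = true))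
      = Finset.univ.filter (fun g : Fin (m+1) → Bool => cnt g = k + 1 ∧ g 0 = false) := by
    apply Finset.filter_congr
    intro g _
    simp [Bool.not_eq_true]
  rw [h1, sum_split_false, sum_split_true, add_comm]

/-! ### The rotation identity -/

lemma rot_sum (m k : ℕ) (j : Fin (m + 1)) :
    ∑ f ∈ Finset.univ.filter (fun f : Fin (m+1) → Bool => cnt f = k),
      (if f j = false then Matrix.trace (word A B f) else 0)
    = ∑ g ∈ Finset.univ.filter (fun g : Fin (m+1) → Bool => cnt g = k ∧ g 0 = false),
      Matrix.trace (word A B g) := by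
  classical
  rw [Finset.sum_filter, Finset.sum_filter]
  apply Fintype.sum_bijective (fun f : Fin (m+1) → Bool => fun i => f (i + j))
  · rw [Function.bijective_iff_has_inverse]
    refine ⟨fun g => fun i => g (i - j), ?_, ?_⟩
    · intro f
      funext i
      simp
    · intro g
      funext i
      simp
  · intro f
    simp only [cnt_rotate, zero_add, trace_word_rotate']
    by_cases h1 : cnt f = k <;> by_cases h2 : f j = false <;> simp [h1, h2]

lemma key (m k : ℕ) (hk : k ≤ m) :
    ((m + 1 - k : ℕ) : ℂ) * Matrix.trace (S A B (m+1) k)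
      = ((m + 1 : ℕ) : ℂ) * Matrix.trace (A * S A B m k) := by
  classical
  have hAS : Matrix.trace (A * S A B m k)
      = ∑ g ∈ Finset.univ.filter (fun g : Fin (m+1) → Bool => cnt g = k ∧ g 0 = false),
          Matrix.trace (word A B g) := by
    rw [← sum_split_false, trace_sum]
  rw [S_eq, trace_sum, Finset.mul_sum]
  have step1 : ∀ f ∈ Finset.univ.filter (fun f : Fin (m+1) → Bool => cnt f = k),
      ((m + 1 - k : ℕ) : ℂ) * Matrix.trace (word A B f)
        = ∑ j : Fin (m+1), (if f j = false then Matrix.trace (word A B f) else 0) := by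
    intro f hf
    have hf1 : cnt f = k := (Finset.mem_filter.mp hf).2
    have hcard : (Finset.univ.filter (fun j : Fin (m+1) => f j = false)).card = m + 1 - k := by
      have h : (Finset.univ.filter (fun j : Fin (m+1) => f j = false))
          = Finset.univ.filter (fun j : Fin (m+1) => ¬ (f j = true)) := by
        apply Finset.filter_congr
        intro i _
        simp [Bool.not_eq_true]
      have h2 := Finset.card_filter_add_card_filter_not
        (s := (Finset.univ : Finset (Fin (m+1)))) (p := fun j => f j = true)
      rw [Finset.card_univ, Fintype.card_fin] at h2
      have hle := cnt_le f
      unfold cnt at hf1 hle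
      rw [h]
      omega
    rw [Finset.sum_ite, Finset.sum_const, Finset.sum_const_zero, hcard, add_zero,
      nsmul_eq_mul]
  rw [Finset.sum_congr rfl step1, Finset.sum_comm]
  have step2 : ∀ j : Fin (m+1),
      (∑ f ∈ Finset.univ.filter (fun f : Fin (m+1) → Bool => cnt f = k),
        (if f j = false then Matrix.trace (word A B f) else 0))
      = Matrix.trace (A * S A B m k) := by
    intro j
    rw [rot_sum, hAS]
  rw [Finset.sum_congr rfl (fun j _ => step2 j), Finset.sum_const, Finset.card_univ,
    Fintype.card_fin, nsmul_eq_mul]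

/-! ### Swapping the roles of `A` and `B` -/

lemma word_swap {m : ℕ} (f : Fin m → Bool) :
    word A B f = word B A (fun i => ! f i) := by
  unfold word
  congr 1
  congr 1
  funext i
  cases hfi : f i <;> simp [hfi]

lemma S_swap (m k : ℕ) (hk : k ≤ m) : S A B m k = S B A m (m - k) := by
  classical
  rw [S_eq, S_eq]
  apply Finset.sum_nbij' (i := fun f : Fin m → Bool => fun i => ! f i)
    (j := fun g : Fin m → Bool => fun i => ! g i)
  · intro f hf
    have hf1 : cnt f = k := (Finset.mem_filter.mp hf).2
    have := cnt_add_cnt_not f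
    simp only [Finset.mem_filter, Finset.mem_univ, true_and]
    omega
  · intro g hg
    have hg1 : cnt g = m - k := (Finset.mem_filter.mp hg).2
    have := cnt_add_cnt_not g
    simp only [Finset.mem_filter, Finset.mem_univ, true_and]
    omega
  · intro f _
    funext i
    simp
  · intro g _
    funext i
    simp
  · intro f _
    exact word_swap A B _

lemma keyB (m k : ℕ) (hk1 : 1 ≤ k) (hk : k ≤ m) :
    ((k : ℕ) : ℂ) * Matrix.trace (S A B (m+1) k)
      = ((m + 1 : ℕ) : ℂ) * Matrix.trace (B * S A B m (k-1)) := by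
  have h1 : S A B m (k-1) = S B A m (m - (k-1)) := S_swap A B m (k-1) (by omega)
  have h2 := key B A m (m - (k-1)) (Nat.sub_le _ _)
  have h3 : S B A (m+1) (m - (k-1)) = S A B (m+1) k := by
    have h5 : m + 1 - k = m - (k - 1) := by omega
    rw [S_swap A B (m+1) k (by omega), h5]
  have h4 : m + 1 - (m - (k-1)) = k := by omega
  rw [h3, h4, ← h1] at h2
  exact h2

/-! ### Trace positivity facts -/

lemma trace_ct_mul (X : Matrix (Fin n) (Fin n) ℂ) :
    Matrix.trace (Xᴴ * X) = ((∑ i, ∑ j, Complex.normSq (X j i) : ℝ) : ℂ) := by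
  rw [Matrix.trace]
  push_cast
  apply Finset.sum_congr rfl
  intro i _
  rw [Matrix.diag_apply, Matrix.mul_apply]
  apply Finset.sum_congr rfl
  intro j _
  rw [Matrix.conjTranspose_apply]
  rw [show star (X j i) = (starRingEnd ℂ) (X j i) from rfl,
    ← Complex.normSq_eq_conj_mul_self]

lemma eq_zero_of_sum_normSq {X : Matrix (Fin n) (Fin n) ℂ}
    (h : (∑ i, ∑ j, Complex.normSq (X j i) : ℝ) = 0) : X = 0 := by
  have h1 := (Finset.sum_eq_zero_iff_of_nonneg (fun i _ =>
    Finset.sum_nonneg (fun j _ => Complex.normSq_nonneg (X j i)))).mp h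
  ext a b
  have h2 := (Finset.sum_eq_zero_iff_of_nonneg (fun j _ =>
    Complex.normSq_nonneg (X j b))).mp (h1 b (Finset.mem_univ b)) a (Finset.mem_univ a)
  simpa using Complex.normSq_eq_zero.mp h2

lemma psd_diag {M : Matrix (Fin n) (Fin n) ℂ} (hM : M.PosSemidef) (i : Fin n) :
    0 ≤ M i i := by
  have := hM.diag_nonneg (i := i)
  simpa [dotProduct, Matrix.mulVec_single, Pi.single_apply] using this

lemma psd_trace {M : Matrix (Fin n) (Fin n) ℂ} (hM : M.PosSemidef) :
    ∃ r : ℝ, 0 ≤ r ∧ Matrix.trace M = (r : ℂ) := by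
  have h : 0 ≤ Matrix.trace M := by
    rw [Matrix.trace]
    exact Finset.sum_nonneg (fun i _ => psd_diag hM i)
  obtain ⟨hre, him⟩ := Complex.nonneg_iff.mp h
  exact ⟨(Matrix.trace M).re, hre, Complex.ext (by simp) (by simp [← him])⟩

lemma trace_ABB {A B : Matrix (Fin n) (Fin n) ℂ} (hA : A.PosSemidef) (hB : B.PosSemidef) :
    ∃ s : ℝ, 0 ≤ s ∧ Matrix.trace (A * (B * B)) = (s : ℂ) := by
  have h : Matrix.trace (A * (B * B)) = Matrix.trace (Bᴴ * A * B) := by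
    rw [← mul_assoc, trace_mul_comm, ← mul_assoc, hB.1.eq]
  rw [h]
  exact psd_trace (hA.conjTranspose_mul_mul_same B)

open scoped MatrixOrder in
lemma trace_AAA {A : Matrix (Fin n) (Fin n) ℂ} (hA : A.PosSemidef) (hA0 : A ≠ 0) :
    ∃ r : ℝ, 0 < r ∧ Matrix.trace (A * (A * A)) = (r : ℂ) := by
  classical
  set R := CFC.sqrt A with hRdef
  have hRR : R * R = A := CFC.sqrt_mul_sqrt_self A hA.nonneg
  have hRH : Rᴴ = R := (CFC.sqrt_nonneg A).posSemidef.1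
  set P : Matrix (Fin n) (Fin n) ℂ := R * (R * R) with hP
  have hA3 : A * (A * A) = Pᴴ * P := by
    rw [hP, ← hRR]
    simp only [Matrix.conjTranspose_mul, hRH]
    simp only [mul_assoc]
  set r : ℝ := ∑ i, ∑ j, Complex.normSq (P j i) with hr
  have htr : Matrix.trace (A * (A * A)) = (r : ℂ) := by
    rw [hA3, trace_ct_mul]
  refine ⟨r, ?_, htr⟩
  rcases lt_or_eq_of_le (Finset.sum_nonneg (fun i _ =>
    Finset.sum_nonneg (fun j _ => Complex.normSq_nonneg (P j i)))) with hlt | heq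
  · exact hlt
  · exfalso
    have hP0 : P = 0 := eq_zero_of_sum_normSq heq.symm
    have hAA : A * A = 0 := by
      rw [← hRR]
      calc R * R * (R * R) = R * (R * (R * R)) := by simp only [mul_assoc]
        _ = R * P := by rw [hP]
        _ = 0 := by rw [hP0, mul_zero]
    have h0 : Matrix.trace (Aᴴ * A) = 0 := by
      rw [hA.1.eq, hAA, Matrix.trace_zero]
    rw [trace_ct_mul] at h0
    exact hA0 (eq_zero_of_sum_normSq (by exact_mod_cast h0))

end St15

theorem stmt_15 {n : ℕ} (m k : ℕ) (hk : 0 < k) (hkm : k < m)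
    (A B : Matrix (Fin n) (Fin n) ℂ) (hA : A.PosSemidef) (hB : B.PosSemidef)
    (hA0 : A ≠ 0)
    (hEL1 : A * S A B (m - 1) k = Matrix.trace (A * S A B (m - 1) k) • (A ^ 2))
    (hEL2 : B * S A B (m - 1) (k - 1) =
      Matrix.trace (B * S A B (m - 1) (k - 1)) • (B ^ 2))
    (htr : (Matrix.trace (S A B m k)).re < 0) :
    (Matrix.trace (S A B (m + 1) k)).re < 0 := by
  classical
  have hm1 : m - 1 + 1 = m := by omega
  have hk1 : k - 1 + 1 = k := by omega
  have hrec : S A B m k = A * S A B (m-1) k + B * S A B (m-1) (k-1) := by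
    have h := St15.S_succ A B (m-1) (k-1)
    rw [hm1, hk1] at h
    exact h
  set c := Matrix.trace (S A B m k) with hc
  set a := Matrix.trace (A * S A B (m-1) k) with ha
  set b := Matrix.trace (B * S A B (m-1) (k-1)) with hb
  have h1 : ((m - k : ℕ) : ℂ) * c = ((m : ℕ) : ℂ) * a := by
    have h := St15.key A B (m-1) k (by omega)
    rw [hm1] at h
    exact h
  have h2 : ((k : ℕ) : ℂ) * c = ((m : ℕ) : ℂ) * b := by
    have h := St15.keyB A B (m-1) k (by omega) (by omega)
    rw [hm1] at h
    exact h
  obtain ⟨r, hr_pos, hr⟩ := St15.trace_AAA hA hA0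
  obtain ⟨s, hs_nonneg, hs⟩ := St15.trace_ABB hA hB
  have h3 : Matrix.trace (A * S A B m k) = a * r + b * s := by
    rw [hrec, mul_add, Matrix.trace_add]
    congr 1
    · rw [← mul_assoc, mul_assoc A A _, hEL1, mul_smul_comm, Matrix.trace_smul, pow_two,
        ← mul_assoc, mul_assoc A A A, hr]
      simp [smul_eq_mul]
    · rw [← mul_assoc, mul_assoc A B _, hEL2, mul_smul_comm, Matrix.trace_smul, pow_two,
        ← mul_assoc, mul_assoc A B B, hs]
      simp [smul_eq_mul, mul_comm]
  have h4 := St15.key A B m k (le_of_lt hkm)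
  rw [h3] at h4
  have h5 : ((↑(m * (m + 1 - k) : ℕ) : ℝ) : ℂ) * Matrix.trace (S A B (m+1) k)
      = ((((m : ℝ) + 1) * (((m : ℝ) - (k : ℝ)) * r + (k : ℝ) * s) : ℝ) : ℂ) * c := by
    push_cast [Nat.cast_sub (by omega : k ≤ m + 1), Nat.cast_sub (by omega : k ≤ m)] at h1 h2 h4 ⊢
    linear_combination (m : ℂ) * h4 - ((m : ℂ) + 1) * (r : ℂ) * h1 - ((m : ℂ) + 1) * (s : ℂ) * h2
  have h6 := congrArg Complex.re h5
  rw [Complex.re_ofReal_mul, Complex.re_ofReal_mul] at h6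
  have hP : (0 : ℝ) < ((m * (m + 1 - k) : ℕ) : ℝ) := by
    have : 0 < m * (m + 1 - k) := Nat.mul_pos (by omega) (by omega)
    exact_mod_cast this
  have hQ : (0 : ℝ) < ((m : ℝ) + 1) * (((m : ℝ) - (k : ℝ)) * r + (k : ℝ) * s) := by
    have hmk : (1 : ℝ) ≤ (m : ℝ) - (k : ℝ) := by
      have : (k : ℝ) + 1 ≤ (m : ℝ) := by exact_mod_cast hkm
      linarith
    have hks : (0 : ℝ) ≤ (k : ℝ) * s := by positivity
    have t1 : r ≤ ((m : ℝ) - (k : ℝ)) * r := by nlinarith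
    have t2 : (0 : ℝ) < ((m : ℝ) - (k : ℝ)) * r + (k : ℝ) * s := by nlinarith
    have t3 : (0 : ℝ) < (m : ℝ) + 1 := by positivity
    exact mul_pos t3 t2
  nlinarith [mul_neg_of_pos_of_neg hQ htr]
end

section
/- The polynomial p(t) = Tr[(A+tB)^m] has all nonnegative coefficients whenever A and B are 2×2 positive semidefinite Hermitian matrices and m is any positive integer. -/
open Matrix BigOperators ComplexOrder

namespace BMV

abbrev Mat := Matrix (Fin 2) (Fin 2) ℂ

lemma prod_entry : ∀ (m : ℕ) (M : Fin m → Mat) (x y : Fin 2),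
    (List.ofFn M).prod x y =
      ∑ g : Fin m → Fin 2,
        if (Fin.cons x g : Fin _ → Fin 2) (Fin.last m) = y then
          ∏ i : Fin m, M i ((Fin.cons x g : Fin _ → Fin 2) i.castSucc) (g i) else 0 := by
  intro m
  induction m with
  | zero =>
    intro M x y
    rw [List.ofFn_zero, List.prod_nil]
    rw [Fintype.sum_eq_single (default : Fin 0 → Fin 2) (fun g hg => absurd (Subsingleton.elim _ _) hg)]
    simp [Matrix.one_apply, Fin.last]
  | succ m ih =>
    intro M x y
    rw [List.ofFn_succ, List.prod_cons, Matrix.mul_apply]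
    rw [← (Fin.consEquiv (fun _ : Fin (m+1) => Fin 2)).sum_comp
      (fun g => if (Fin.cons x g : Fin _ → Fin 2) (Fin.last (m+1)) = y then
          ∏ i : Fin (m+1), M i ((Fin.cons x g : Fin _ → Fin 2) i.castSucc) (g i) else 0)]
    rw [Fintype.sum_prod_type]
    refine Finset.sum_congr rfl fun z _ => ?_
    rw [ih (fun i => M i.succ) z y, Finset.mul_sum]
    refine Finset.sum_congr rfl fun g' _ => ?_
    have hcond : (Fin.cons x ((Fin.consEquiv (fun _ : Fin (m+1) => Fin 2)) (z, g')) : Fin (m+2) → Fin 2) (Fin.last (m+1))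
        = (Fin.cons z g' : Fin _ → Fin 2) (Fin.last m) := by
      show (Fin.cons x (Fin.cons z g' : Fin (m+1) → Fin 2) : Fin (m+2) → Fin 2) (Fin.last (m+1))
          = (Fin.cons z g' : Fin (m+1) → Fin 2) (Fin.last m)
      rw [← Fin.succ_last, Fin.cons_succ]
    rw [mul_ite, mul_zero, hcond]
    congr 1
    rw [Fin.prod_univ_succ]
    have hce : (Fin.consEquiv fun _ : Fin (m+1) => Fin 2) (z, g')
        = (Fin.cons z g' : Fin (m+1) → Fin 2) := rfl
    rw [hce]
    refine (congrArg₂ (· * ·) ?_ ?_).symm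
    · rw [Fin.castSucc_zero, Fin.cons_zero, Fin.cons_zero]
    · refine Finset.prod_congr rfl fun i _ => ?_
      rw [← Fin.succ_castSucc, Fin.cons_succ, Fin.cons_succ]

lemma cons_cyc (m : ℕ) (h : Fin (m+1) → Fin 2) (i : Fin (m+1)) :
    (Fin.cons (h (Fin.last m + 1)) (fun j : Fin (m+1) => h (j + 1)) : Fin (m+2) → Fin 2)
      i.castSucc = h i := by
  induction i using Fin.cases with
  | zero => rw [Fin.castSucc_zero, Fin.cons_zero, Fin.last_add_one]
  | succ k => rw [← Fin.succ_castSucc, Fin.cons_succ, Fin.coeSucc_eq_succ]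

lemma trace_prod (m : ℕ) (M : Fin (m+1) → Mat) :
    Matrix.trace (List.ofFn M).prod =
      ∑ g : Fin (m+1) → Fin 2, ∏ i : Fin (m+1), M i (g i) (g (i + 1)) := by
  rw [Matrix.trace]
  simp only [Matrix.diag]
  simp_rw [prod_entry (m+1) M]
  rw [Finset.sum_comm]
  have step1 : ∀ g : Fin (m+1) → Fin 2,
      (∑ x : Fin 2, if (Fin.cons x g : Fin _ → Fin 2) (Fin.last (m+1)) = x then
        ∏ i : Fin (m+1), M i ((Fin.cons x g : Fin _ → Fin 2) i.castSucc) (g i) else 0)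
      = ∏ i : Fin (m+1), M i ((Fin.cons (g (Fin.last m)) g : Fin _ → Fin 2) i.castSucc) (g i) := by
    intro g
    have hc : ∀ x : Fin 2, (Fin.cons x g : Fin _ → Fin 2) (Fin.last (m+1)) = g (Fin.last m) := by
      intro x; rw [← Fin.succ_last, Fin.cons_succ]
    simp_rw [hc]
    rw [Finset.sum_ite_eq Finset.univ (g (Fin.last m))
      (fun x => ∏ i : Fin (m+1), M i ((Fin.cons x g : Fin _ → Fin 2) i.castSucc) (g i))]
    simp
  simp_rw [step1]
  refine (Fintype.sum_equiv
    ((Equiv.arrowCongr (Equiv.addRight (1 : Fin (m+1))) (Equiv.refl (Fin 2))).symm)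
    _ _ fun h => ?_).symm
  have hfun : ((Equiv.arrowCongr (Equiv.addRight (1 : Fin (m+1))) (Equiv.refl (Fin 2))).symm h)
      = fun j => h (j + 1) := rfl
  rw [hfun]
  exact Finset.prod_congr rfl fun i _ => by rw [cons_cyc m h i]

lemma fin2_ne_one {x : Fin 2} : ¬ x = 1 ↔ x = 0 := by revert x; decide

lemma count_eq (m : ℕ) (g : Fin (m+1) → Fin 2) :
    (Finset.univ.filter fun i => g i = 0 ∧ g (i+1) = 1).card
      = (Finset.univ.filter fun i => g i = 1 ∧ g (i+1) = 0).card := by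
  have hshift : (Finset.univ.filter fun i : Fin (m+1) => g (i+1) = 1).card
      = (Finset.univ.filter fun i : Fin (m+1) => g i = 1).card := by
    refine Finset.card_bij' (fun i _ => i + 1) (fun i _ => i - 1) ?_ ?_ ?_ ?_
    · intro a ha
      simp only [Finset.mem_filter, Finset.mem_univ, true_and] at ha ⊢
      exact ha
    · intro a ha
      simp only [Finset.mem_filter, Finset.mem_univ, true_and] at ha ⊢
      rw [sub_add_cancel]
      exact ha
    · intro a _; exact add_sub_cancel_right a 1
    · intro a _; exact sub_add_cancel a 1
  have e1 := Finset.card_filter_add_card_filter_not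
    (s := Finset.univ.filter fun i : Fin (m+1) => g i = 1) (p := fun i => g (i+1) = 1)
  have e2 := Finset.card_filter_add_card_filter_not
    (s := Finset.univ.filter fun i : Fin (m+1) => g (i+1) = 1) (p := fun i => g i = 1)
  rw [Finset.filter_filter, Finset.filter_filter] at e1 e2
  have c1 : (Finset.univ.filter fun i : Fin (m+1) => g i = 1 ∧ ¬ g (i+1) = 1)
      = Finset.univ.filter fun i => g i = 1 ∧ g (i+1) = 0 := by
    apply Finset.filter_congr; intro i _; rw [fin2_ne_one]
  have c2 : (Finset.univ.filter fun i : Fin (m+1) => g (i+1) = 1 ∧ ¬ g i = 1)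
      = Finset.univ.filter fun i => g i = 0 ∧ g (i+1) = 1 := by
    apply Finset.filter_congr; intro i _
    rw [fin2_ne_one]; exact and_comm
  have c3 : (Finset.univ.filter fun i : Fin (m+1) => g (i+1) = 1 ∧ g i = 1)
      = Finset.univ.filter fun i => g i = 1 ∧ g (i+1) = 1 := by
    apply Finset.filter_congr; intro i _; exact and_comm
  rw [c1] at e1
  rw [c2, c3] at e2
  omega

lemma fin2_aux1 (a b : Fin 2) : (¬ a = b ∧ a = 0) ↔ (a = 0 ∧ b = 1) := by revert a b; decide

lemma fin2_aux2 (a b : Fin 2) : (¬ a = b ∧ ¬ a = 0) ↔ (a = 1 ∧ b = 0) := by revert a b; decide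

lemma psd_diag {B : Mat} (hB : B.PosSemidef) (x : Fin 2) : 0 ≤ B x x := by
  exact hB.diag_nonneg

lemma term_nonneg (m : ℕ) (d : Fin 2 → ℝ) (hd : ∀ i, 0 ≤ d i) {B : Mat} (hB : B.PosSemidef)
    (f : Fin (m+1) → Bool) (g : Fin (m+1) → Fin 2) :
    0 ≤ ∏ i : Fin (m+1),
      (if f i then B else Matrix.diagonal fun j => (d j : ℂ)) (g i) (g (i+1)) := by
  set A := Matrix.diagonal fun j => (d j : ℂ) with hA
  set W : Fin (m+1) → ℂ := fun i => (if f i then B else A) (g i) (g (i+1)) with hW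
  by_cases hz : ∃ i, g i ≠ g (i+1) ∧ f i = false
  · obtain ⟨i, hgi, hfi⟩ := hz
    have hWi : W i = 0 := by
      rw [hW]; dsimp only; rw [hfi]
      simpa using Matrix.diagonal_apply_ne (fun j => (d j : ℂ)) hgi
    exact le_of_eq (Finset.prod_eq_zero (Finset.mem_univ i) hWi).symm
  · push_neg at hz
    have hf : ∀ i, g i ≠ g (i+1) → f i = true := by
      intro i h
      cases hfi : f i
      · exact absurd hfi (hz i h)
      · rfl
    rw [← Finset.prod_filter_mul_prod_filter_not Finset.univ (fun i => g i = g (i+1)) W]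
    refine mul_nonneg ?_ ?_
    · refine Finset.prod_nonneg fun i hi => ?_
      rw [Finset.mem_filter] at hi
      rw [hW]; dsimp only; rw [← hi.2]
      split
      · exact psd_diag hB (g i)
      · rw [hA, Matrix.diagonal_apply_eq]
        exact Complex.zero_le_real.mpr (hd _)
    · have hrw : ∀ i ∈ Finset.univ.filter (fun i : Fin (m+1) => ¬ g i = g (i+1)),
          W i = B (g i) (g (i+1)) := by
        intro i hi; rw [Finset.mem_filter] at hi
        rw [hW]; dsimp only; rw [hf i hi.2]; rfl
      rw [Finset.prod_congr rfl hrw]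
      rw [← Finset.prod_filter_mul_prod_filter_not
        (Finset.univ.filter fun i : Fin (m+1) => ¬ g i = g (i+1))
        (fun i => g i = 0) (fun i => B (g i) (g (i+1)))]
      rw [Finset.filter_filter, Finset.filter_filter]
      have hs01 : (Finset.univ.filter fun i : Fin (m+1) => ¬ g i = g (i+1) ∧ g i = 0)
          = Finset.univ.filter fun i => g i = 0 ∧ g (i+1) = 1 :=
        Finset.filter_congr fun i _ => by rw [fin2_aux1]
      have hs10 : (Finset.univ.filter fun i : Fin (m+1) => ¬ g i = g (i+1) ∧ ¬ g i = 0)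
          = Finset.univ.filter fun i => g i = 1 ∧ g (i+1) = 0 :=
        Finset.filter_congr fun i _ => by rw [fin2_aux2]
      rw [hs01, hs10]
      have hp01 : ∏ i ∈ (Finset.univ.filter fun i : Fin (m+1) => g i = 0 ∧ g (i+1) = 1),
          B (g i) (g (i+1))
          = (B 0 1) ^ (Finset.univ.filter fun i : Fin (m+1) => g i = 0 ∧ g (i+1) = 1).card := by
        rw [Finset.prod_congr rfl (fun i hi => ?_), Finset.prod_const]
        rw [Finset.mem_filter] at hi
        rw [hi.2.1, hi.2.2]
      have hp10 : ∏ i ∈ (Finset.univ.filter fun i : Fin (m+1) => g i = 1 ∧ g (i+1) = 0),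
          B (g i) (g (i+1))
          = (B 1 0) ^ (Finset.univ.filter fun i : Fin (m+1) => g i = 1 ∧ g (i+1) = 0).card := by
        rw [Finset.prod_congr rfl (fun i hi => ?_), Finset.prod_const]
        rw [Finset.mem_filter] at hi
        rw [hi.2.1, hi.2.2]
      rw [hp01, hp10, ← count_eq m g, ← hB.1.apply 1 0, ← mul_pow]
      have : B 0 1 * star (B 0 1) = ((Complex.normSq (B 0 1) : ℝ) : ℂ) := by
        rw [RCLike.star_def, Complex.mul_conj]
      rw [this]
      exact pow_nonneg (Complex.zero_le_real.mpr (Complex.normSq_nonneg _)) _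

lemma conj_prod (U V : Mat) (hUV : U * V = 1) (hVU : V * U = 1) :
    ∀ L : List Mat, (L.map fun X => U * X * V).prod = U * L.prod * V := by
  intro L; induction L with
  | nil => simp [hUV]
  | cons a L ih =>
    rw [List.map_cons, List.prod_cons, ih, List.prod_cons]
    have h1 : V * (U * (L.prod * V)) = L.prod * V := by
      rw [← mul_assoc V U, hVU, one_mul]
    simp only [mul_assoc, h1]

lemma word_nonneg (m : ℕ) {A B : Mat} (hA : A.PosSemidef) (hB : B.PosSemidef)
    (f : Fin (m+1) → Bool) :
    0 ≤ Matrix.trace (List.ofFn fun i => if f i then B else A).prod := by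
  set U : Mat := (Matrix.IsHermitian.eigenvectorUnitary hA.1 : Mat) with hU
  have hUV : U * star U = 1 :=
    (Matrix.mem_unitaryGroup_iff).mp (Matrix.IsHermitian.eigenvectorUnitary hA.1).2
  have hVU : star U * U = 1 :=
    (Matrix.mem_unitaryGroup_iff').mp (Matrix.IsHermitian.eigenvectorUnitary hA.1).2
  set d : Fin 2 → ℝ := hA.1.eigenvalues with hd'
  have hd : ∀ i, 0 ≤ d i := fun i => hA.eigenvalues_nonneg i
  set D : Mat := Matrix.diagonal fun j => (d j : ℂ) with hD
  have hspec : A = U * D * star U := by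
    have h := hA.1.spectral_theorem
    rw [Unitary.conjStarAlgAut_apply] at h
    exact h
  set B' : Mat := star U * B * U with hB'def
  have hB' : B'.PosSemidef := hB.conjTranspose_mul_mul_same U
  have hletter : (fun i : Fin (m+1) => if f i then B else A)
      = fun i => U * (if f i then B' else D) * star U := by
    funext i
    cases f i
    · simpa using hspec
    · simp only [if_true, Bool.cond_true, hB'def]
      rw [← mul_assoc, ← mul_assoc, hUV, one_mul, mul_assoc, hUV, mul_one]
  rw [hletter]
  have hmap : (List.ofFn fun i : Fin (m+1) => U * (if f i then B' else D) * star U)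
      = ((List.ofFn fun i : Fin (m+1) => if f i then B' else D).map
          fun X => U * X * star U) := by
    rw [List.map_ofFn]; rfl
  rw [hmap, conj_prod U (star U) hUV hVU, Matrix.trace_mul_cycle, hVU, one_mul]
  rw [trace_prod m (fun i => if f i then B' else D)]
  exact Finset.sum_nonneg fun g _ => term_nonneg m d hd hB' f g

end BMV

/-- The `n = 2` case of the BMV conjecture: every coefficient of
`p(t) = Tr[(A+tB)^m]`, namely `Tr[S_{m,k}(A,B)]`, is nonnegative. -/
theorem stmt_17 (A B : Matrix (Fin 2) (Fin 2) ℂ)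
    (hA : A.PosSemidef) (hB : B.PosSemidef) (m : ℕ) (hm : 0 < m) :
    ∀ k : ℕ, 0 ≤ (Matrix.trace (S A B m k)).re := by
  intro k
  obtain ⟨m', rfl⟩ : ∃ m', m = m' + 1 := ⟨m - 1, by omega⟩
  have h : 0 ≤ Matrix.trace (S A B (m'+1) k) := by
    rw [S, Matrix.trace_sum]
    exact Finset.sum_nonneg fun f _ => BMV.word_nonneg m' hA hB f
  exact (Complex.nonneg_iff.mp h).1
end

section
/- For any n×n Hermitian matrices A, B of Frobenius norm 1 and any integer m ≥ 2, |Tr[A^{m-1}B]| ≤ 1; equality implies A = ±B, B is diagonalizable with the same eigenbasis as A, and if m > 2 then A has exactly one nonzero eigenvalue. -/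
open Matrix BigOperators ComplexOrder

/-!
Put `E = A^(m-1)` and `t = Tr[E B]`, which is real because `E` and `B` are Hermitian.
Expanding `0 ≤ ‖B - t E‖² = 1 - 2t² + t² ‖E‖²` and using
`‖E‖² = Σ λᵢ^(2(m-1)) ≤ Σ λᵢ² = 1` (as `|λᵢ| ≤ 1`) gives `t² ≤ 1`.
If `t² = 1` both estimates are sharp: `B = t E`, and for `m > 2` every `λᵢ²` is `0` or `1`,
so `A` has a single nonzero eigenvalue `±1` and `A^(m-1) = ±A`.
-/

namespace Finset

variable {ι : Type*} {s : Finset ι} {x : ι → ℝ}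

theorem sum_pow_le_one_of_sum_eq_one (hx₀ : ∀ i ∈ s, 0 ≤ x i) (hx₁ : ∑ i ∈ s, x i = 1) {k : ℕ}
    (hk : k ≠ 0) : ∑ i ∈ s, x i ^ k ≤ 1 :=
  hx₁ ▸ sum_le_sum fun i hi ↦ pow_le_of_le_one (hx₀ i hi)
    (hx₁ ▸ single_le_sum hx₀ hi) hk

theorem exists_eq_one_of_sum_pow_eq_one (hx₀ : ∀ i ∈ s, 0 ≤ x i) (hx₁ : ∑ i ∈ s, x i = 1)
    {k : ℕ} (hk : 2 ≤ k) (h : ∑ i ∈ s, x i ^ k = 1) :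
    ∃ i ∈ s, x i = 1 ∧ ∀ j ∈ s, j ≠ i → x j = 0 := by
  classical
  have hx_le : ∀ i ∈ s, x i ≤ 1 := fun i hi ↦ hx₁ ▸ single_le_sum hx₀ hi
  have hpow : ∀ i ∈ s, x i ^ k = x i :=
    (sum_eq_sum_iff_of_le fun i hi ↦ pow_le_of_le_one (hx₀ i hi) (hx_le i hi) (by omega)).mp
      (h.trans hx₁.symm)
  obtain ⟨i, hi, hxi⟩ := exists_ne_zero_of_sum_ne_zero (hx₁ ▸ one_ne_zero)
  have hxi₁ : x i = 1 := by
    have := hpow i hi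
    rwa [← pow_sub_one_mul (by omega : k ≠ 0), mul_eq_right₀ hxi,
      pow_eq_one_iff_of_nonneg (hx₀ i hi) (by omega)] at this
  refine ⟨i, hi, hxi₁, fun j hj hji ↦ ?_⟩
  have herase : ∑ l ∈ s.erase i, x l = 0 := by linarith [add_sum_erase s x hi]
  exact (sum_eq_zero_iff_of_nonneg fun l hl ↦ hx₀ l (mem_of_mem_erase hl)).mp herase j
    (mem_erase.mpr ⟨hji, hj⟩)

end Finset

theorem eq_or_eq_neg_of_eq_smul {R M : Type*} [Ring R] [NoZeroDivisors R] [AddCommGroup M]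
    [Module R M] {a b : M} {s : R} (hs : s ^ 2 = 1) (h : b = s • a) : a = b ∨ a = -b := by
  rcases sq_eq_one_iff.mp hs with rfl | rfl
  · exact Or.inl (by rw [h, one_smul])
  · exact Or.inr (by rw [h, neg_one_smul, neg_neg])

open Unitary

namespace Matrix

variable {ι : Type*} [Fintype ι]

theorem trace_conjStarAlgAut [DecidableEq ι] {S R : Type*} [CommSemiring S] [CommSemiring R]
    [StarRing R] [Algebra S R] (u : unitary (Matrix ι ι R))
    (X : Matrix ι ι R) : trace (conjStarAlgAut S _ u X) = trace X := by
  rw [conjStarAlgAut_apply, trace_mul_cycle, coe_star_mul_self, one_mul]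

variable {𝕜 : Type*} [RCLike 𝕜]

theorem re_trace_sub_smul_mul_sub_smul (X Y : Matrix ι ι 𝕜) (s : ℝ) :
    RCLike.re (trace ((Y - s • X) * (Y - s • X))) =
      RCLike.re (trace (Y * Y)) - 2 * s * RCLike.re (trace (X * Y)) +
        s ^ 2 * RCLike.re (trace (X * X)) := by
  simp only [sub_mul, mul_sub, Matrix.smul_mul, Matrix.mul_smul, smul_smul, trace_sub, trace_smul,
    map_sub, RCLike.smul_re]
  rw [trace_mul_comm Y X]
  ring

namespace IsHermitian

variable {X Y : Matrix ι ι 𝕜}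

theorem ofReal_re_trace_mul (hX : X.IsHermitian) (hY : Y.IsHermitian) :
    (RCLike.re (trace (X * Y)) : 𝕜) = trace (X * Y) := by
  rw [← RCLike.conj_eq_iff_re, ← RCLike.star_def, ← trace_conjTranspose, conjTranspose_mul,
    hX.eq, hY.eq, trace_mul_comm]

theorem re_trace_mul_self_nonneg (hX : X.IsHermitian) : 0 ≤ RCLike.re (trace (X * X)) := by
  have h := (posSemidef_self_mul_conjTranspose X).trace_nonneg
  rw [hX.eq] at h
  exact (RCLike.nonneg_iff.mp h).1

theorem re_trace_mul_self_eq_zero_iff (hX : X.IsHermitian) :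
    RCLike.re (trace (X * X)) = 0 ↔ X = 0 := by
  conv_rhs => rw [← trace_mul_conjTranspose_self_eq_zero_iff, hX.eq, ← hX.ofReal_re_trace_mul hX]
  simp

theorem sq_re_trace_mul_le_one (hX : X.IsHermitian) (hY : Y.IsHermitian)
    (hXX : RCLike.re (trace (X * X)) ≤ 1) (hYY : RCLike.re (trace (Y * Y)) = 1) :
    RCLike.re (trace (X * Y)) ^ 2 ≤ 1 := by
  have h :=
    (hY.sub (hX.smul (IsSelfAdjoint.all (RCLike.re (trace (X * Y)))))).re_trace_mul_self_nonneg
  rw [re_trace_sub_smul_mul_sub_smul, hYY] at h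
  nlinarith [mul_le_mul_of_nonneg_left hXX (sq_nonneg (RCLike.re (trace (X * Y))))]

theorem eq_smul_of_sq_re_trace_mul_eq_one (hX : X.IsHermitian) (hY : Y.IsHermitian)
    (hXX : RCLike.re (trace (X * X)) ≤ 1) (hYY : RCLike.re (trace (Y * Y)) = 1)
    (h : RCLike.re (trace (X * Y)) ^ 2 = 1) :
    RCLike.re (trace (X * X)) = 1 ∧ Y = RCLike.re (trace (X * Y)) • X := by
  have hYtX := hY.sub (hX.smul (IsSelfAdjoint.all (RCLike.re (trace (X * Y)))))
  have h₀ := hYtX.re_trace_mul_self_nonneg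
  rw [re_trace_sub_smul_mul_sub_smul, hYY, h] at h₀
  have hXX₁ : RCLike.re (trace (X * X)) = 1 := by linarith
  refine ⟨hXX₁, sub_eq_zero.mp (hYtX.re_trace_mul_self_eq_zero_iff.mp ?_)⟩
  rw [re_trace_sub_smul_mul_sub_smul, hYY, h, hXX₁]
  linear_combination (-2) * h

variable [DecidableEq ι] {A : Matrix ι ι 𝕜}

theorem pow_eq_conjStarAlgAut (hA : A.IsHermitian) (k : ℕ) :
    A ^ k = conjStarAlgAut 𝕜 _ hA.eigenvectorUnitary
      (diagonal fun i ↦ (hA.eigenvalues i : 𝕜) ^ k) := by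
  conv_lhs => rw [hA.spectral_theorem]
  rw [← map_pow, diagonal_pow]
  rfl

theorem re_trace_pow (hA : A.IsHermitian) (k : ℕ) :
    RCLike.re (trace (A ^ k)) = ∑ i, hA.eigenvalues i ^ k := by
  rw [hA.pow_eq_conjStarAlgAut, trace_conjStarAlgAut, trace_diagonal, map_sum]
  simp only [← RCLike.ofReal_pow, RCLike.ofReal_re]

theorem pow_succ_eq_smul_of_eigenvalues_eq_zero (hA : A.IsHermitian) {i : ι}
    (h : ∀ j ≠ i, hA.eigenvalues j = 0) (k : ℕ) : A ^ (k + 1) = hA.eigenvalues i ^ k • A := by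
  conv_rhs => arg 2; rw [hA.spectral_theorem]
  rw [hA.pow_eq_conjStarAlgAut, RCLike.real_smul_eq_coe_smul (K := 𝕜), ← map_smul]
  congr 1
  ext j l
  by_cases hj : j = i
  · subst hj
    simp [diagonal_apply, pow_succ, mul_comm]
  · simp [diagonal_apply, h j hj]

theorem exists_pow_eq_smul_self (hA : A.IsHermitian) (hsum : ∑ i, hA.eigenvalues i ^ 2 = 1)
    {k : ℕ} (hk : 2 ≤ k) (h : ∑ i, (hA.eigenvalues i ^ 2) ^ k = 1) :
    ∃ i, hA.eigenvalues i ^ 2 = 1 ∧ (∀ j ≠ i, hA.eigenvalues j = 0) ∧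
      A ^ k = hA.eigenvalues i ^ (k - 1) • A := by
  obtain ⟨i, -, hi, hj⟩ :=
    Finset.exists_eq_one_of_sum_pow_eq_one (fun i _ ↦ sq_nonneg _) hsum hk h
  have hj' : ∀ j ≠ i, hA.eigenvalues j = 0 :=
    fun j hji ↦ (pow_eq_zero_iff two_ne_zero).mp (hj j (Finset.mem_univ j) hji)
  refine ⟨i, hi, hj', ?_⟩
  rw [← hA.pow_succ_eq_smul_of_eigenvalues_eq_zero hj', Nat.sub_add_cancel (by omega)]

end IsHermitian
end Matrix

theorem Matrix.IsHermitian.re_trace_mul_self_of_frobNorm_eq_one {n : ℕ}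
    {A : Matrix (Fin n) (Fin n) ℂ} (hA : A.IsHermitian) (h : frobNorm A = 1) :
    RCLike.re (trace (A * A)) = 1 := by
  rwa [frobNorm, Real.sqrt_eq_one, hA.eq] at h

theorem stmt_19 {n : ℕ} (A B : Matrix (Fin n) (Fin n) ℂ)
    (hA : A.IsHermitian) (hB : B.IsHermitian)
    (hnA : frobNorm A = 1) (hnB : frobNorm B = 1) (m : ℕ) (hm : 2 ≤ m) :
    ‖Matrix.trace (A ^ (m - 1) * B)‖ ≤ 1 ∧
      (‖Matrix.trace (A ^ (m - 1) * B)‖ = 1 →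
        (A = B ∨ A = -B) ∧ A * B = B * A ∧
          (2 < m → ∃ i : Fin n, hA.eigenvalues i ≠ 0 ∧
            ∀ j : Fin n, j ≠ i → hA.eigenvalues j = 0)) := by
  have hB₁ := hB.re_trace_mul_self_of_frobNorm_eq_one hnB
  have hsum : ∑ i, hA.eigenvalues i ^ 2 = 1 := by
    rw [← hA.re_trace_pow, sq, hA.re_trace_mul_self_of_frobNorm_eq_one hnA]
  have hpow : RCLike.re (trace (A ^ (m - 1) * A ^ (m - 1))) =
      ∑ i, (hA.eigenvalues i ^ 2) ^ (m - 1) := by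
    simp only [← pow_add, hA.re_trace_pow, ← pow_mul, two_mul]
  have hpow_le : RCLike.re (trace (A ^ (m - 1) * A ^ (m - 1))) ≤ 1 :=
    hpow ▸ Finset.sum_pow_le_one_of_sum_eq_one (fun i _ ↦ sq_nonneg _) hsum (by omega)
  rw [← (hA.pow (m - 1)).ofReal_re_trace_mul hB, RCLike.norm_ofReal]
  refine ⟨(sq_le_one_iff_abs_le_one _).mp ((hA.pow _).sq_re_trace_mul_le_one hB hpow_le hB₁),
    fun h ↦ ?_⟩
  have ht : RCLike.re (trace (A ^ (m - 1) * B)) ^ 2 = 1 := by rw [← sq_abs, h, one_pow]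
  obtain ⟨hpow₁, hBA⟩ := (hA.pow _).eq_smul_of_sq_re_trace_mul_eq_one hB hpow_le hB₁ ht
  generalize RCLike.re (trace (A ^ (m - 1) * B)) = t at ht hBA
  have hcomm : A * B = B * A := by
    rw [hBA]
    exact (((Commute.refl A).pow_right (m - 1)).smul_right t).eq
  rcases hm.eq_or_lt with rfl | hm
  · exact ⟨eq_or_eq_neg_of_eq_smul ht (by rwa [pow_one] at hBA), hcomm, by omega⟩
  obtain ⟨i, hi, hj, hAi⟩ := hA.exists_pow_eq_smul_self hsum (by omega : 2 ≤ m - 1) (hpow ▸ hpow₁)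
  refine ⟨eq_or_eq_neg_of_eq_smul (s := t * hA.eigenvalues i ^ (m - 1 - 1)) ?_
    (by rw [hBA, hAi, smul_smul]), hcomm, fun _ ↦ ⟨i, fun h0 ↦ by simp [h0] at hi, hj⟩⟩
  rw [mul_pow, ht, one_mul, ← pow_mul, mul_comm, pow_mul, hi, one_pow]
end
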